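/- arXiv:1909.02102 — 9 statements merged into one kernel-verified Lean document; each statement's English description precedes it below -/
import Mathlib

section
/- Under the listed hypotheses, the Lyapunov function ℰ(t) := e^{√β t} ( ½ ∫ (F(t,x) − √β T(t,x))² R(t,x)² dμ(x) + e(t) − e* ) is non-increasing in t on [0,∞); consequently, for all t ≥ 0, e(t) − e* ≤ e^{−√β t} ℰ(0). That is, the Fisher–Rao accelerated information gradient flow with damping α = 2√β of a β-strongly geodesically convex energy converges at rate O(e^{−√β t}). -/
/-!
Write `V = ½ ∫ (F - √β T)² R² dμ + e - e*`, so that `ℰ = e^{√β t} V` and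
`ℰ' = e^{√β t} (√β V + V')`. Since `∂ₜR = ½ F R`, the cubic terms of `∂ₜ((F - √β T)² R²)` cancel,
and the terms involving `m` and `m'` integrate to zero because `∫ F R² = ∫ T R² = 0`. With
`a = ∫ F² R²`, `b = ∫ F T R²` and `∫ T² R² = 4H²`, what remains is
`√β V + V' = -√β a / 2 - θ (4H² a - b²) - √β (e* - e - ∫ Ψ T R² - 2βH²)`,
`θ = √β (sin H - H cos H) / (4H² sin H)`, and each term is non-positive: `θ ≥ 0` because
`tan H > H`, the middle factor by Cauchy–Schwarz, the last by strong convexity.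
Finally `e - e* ≤ V = e^{-√β t} ℰ ≤ e^{-√β t} ℰ(0)`.
-/

open MeasureTheory

section

open Real Set Filter Topology

variable {Ω : Type*} [MeasurableSpace Ω] {μ : Measure Ω}

lemma integrable_of_memLp_two_of_eq_mul {u v w : Ω → ℝ} (hu : MemLp u 2 μ) (hv : MemLp v 2 μ)
    (hw : ∀ x, w x = u x * v x) : Integrable w μ :=
  (funext hw : w = u * v) ▸ hu.integrable_mul hv

lemma integral_sub_mul_sq {u v : Ω → ℝ} (hu : MemLp u 2 μ) (hv : MemLp v 2 μ) (l : ℝ) :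
    ∫ x, (u x - l * v x) ^ 2 ∂μ =
      ∫ x, u x ^ 2 ∂μ - 2 * l * ∫ x, u x * v x ∂μ + l ^ 2 * ∫ x, v x ^ 2 ∂μ := by
  have := hu.integrable_sq
  have := hv.integrable_sq
  have := integrable_of_memLp_two_of_eq_mul hu hv fun _ => rfl
  have hexp : ∀ x, (u x - l * v x) ^ 2 = u x ^ 2 - 2 * l * (u x * v x) + l ^ 2 * v x ^ 2 :=
    fun x => by ring
  simp (disch := fun_prop) only [hexp, integral_add, integral_sub, integral_const_mul]

lemma sq_integral_mul_le {u v : Ω → ℝ} (hu : MemLp u 2 μ) (hv : MemLp v 2 μ) :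
    (∫ x, u x * v x ∂μ) ^ 2 ≤ (∫ x, u x ^ 2 ∂μ) * ∫ x, v x ^ 2 ∂μ := by
  have h := discrim_le_zero (a := ∫ x, v x ^ 2 ∂μ) (b := -2 * ∫ x, u x * v x ∂μ)
    (c := ∫ x, u x ^ 2 ∂μ) fun l => by
      have := integral_sub_mul_sq hu hv l ▸ integral_nonneg fun x => sq_nonneg (u x - l * v x)
      linarith
  rw [discrim] at h
  linarith

lemma eq_zero_of_integral_mul_sq_eq_zero {w r : Ω → ℝ} (hr : ∫ x, r x ^ 2 ∂μ = 1)
    (hw : ∫ x, w x * r x ^ 2 ∂μ = 0) (hconst : ∀ x y, w x = w y) (x : Ω) : w x = 0 := by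
  simpa only [hconst _ x, integral_const_mul, hr, mul_one] using hw

lemma integral_sub_integral_mul_sq {φ r : Ω → ℝ} (hr : ∫ x, r x ^ 2 ∂μ = 1)
    (h : Integrable (fun x => (φ x - ∫ y, φ y * r y ^ 2 ∂μ) * r x ^ 2) μ) :
    ∫ x, (φ x - ∫ y, φ y * r y ^ 2 ∂μ) * r x ^ 2 ∂μ = 0 := by
  set m := ∫ y, φ y * r y ^ 2 ∂μ
  have hr2 : Integrable (fun x => r x ^ 2) μ := .of_integral_ne_zero (by simp [hr])
  have : Integrable (fun x => φ x * r x ^ 2) μ :=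
    (h.add (hr2.const_mul m)).congr (ae_of_all _ fun x => by simp only [Pi.add_apply]; ring)
  have hexp : ∀ x, (φ x - m) * r x ^ 2 = φ x * r x ^ 2 - m * r x ^ 2 := fun x => by ring
  simp (disch := fun_prop) only [hexp, integral_sub, integral_const_mul, hr]
  ring

lemma hasDerivAt_two_mul_div_sin_arccos {c H : ℝ → ℝ} {t c' : ℝ} (hH : ∀ s, H s = arccos (c s))
    (hc : HasDerivAt c c' t) (hct : c t ∈ Ioo (-1) 1) :
    HasDerivAt (fun s => 2 * H s / sin (H s))
      (-(c' * (sin (H t) - H t * c t) / (H t * sin (H t) ^ 2)) * (2 * H t / sin (H t))) t := by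
  obtain ⟨hc₀, hc₁⟩ := hct
  have hsin : sin (H t) = √(1 - c t ^ 2) := by rw [hH, sin_arccos]
  have hsin₀ : 0 < sin (H t) := hsin ▸ sqrt_pos.2 (by nlinarith)
  have hH₀ : 0 < H t := hH t ▸ arccos_pos.2 hc₁
  have hcos : cos (H t) = c t := by rw [hH, cos_arccos hc₀.le hc₁.le]
  have hH' : HasDerivAt H (-(1 / sin (H t)) * c') t := by
    rw [hsin, funext hH]
    exact (hasDerivAt_arccos hc₀.ne' hc₁.ne).comp t hc
  refine ((hH'.const_mul 2).div hH'.sin hsin₀.ne').congr_deriv ?_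
  rw [hcos]
  field_simp
  ring

lemma hasDerivAt_mul_sub_mul_div {γ ρ c v : ℝ → ℝ} {t k κ g c' : ℝ}
    (hv : ∀ s, v s = γ s * (k - ρ s * c s) / ρ s) (hγ : HasDerivAt γ (-κ * γ t) t)
    (hρ : HasDerivAt ρ (g * ρ t) t) (hc : HasDerivAt c c' t) (hρ₀ : ρ t ≠ 0) :
    HasDerivAt v (-κ * v t - g * (v t + γ t * c t) - γ t * c') t := by
  rw [funext hv]
  refine ((hγ.mul ((hρ.mul hc).const_sub k)).div hρ hρ₀).congr_deriv ?_
  simp only [Pi.mul_apply]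
  field_simp
  ring

lemma hasDerivAt_sub_mul_sq_mul_sq {ρ u v : ℝ → ℝ} {t σ φ ψ m m' κ γ c c' : ℝ}
    (hρ : HasDerivAt ρ (1 / 2 * u t * ρ t) t)
    (hu : HasDerivAt u (-(2 * σ * φ + 1 / 2 * φ ^ 2 - m * φ + ψ) - m') t) (hφ : u t = φ - m)
    (hv : HasDerivAt v (-κ * v t - 1 / 2 * u t * (v t + γ * c) - γ * c') t) :
    HasDerivAt (fun s => (u s - σ * v s) ^ 2 * ρ s ^ 2)
      ((u t - σ * v t) * ρ t ^ 2 * (σ * (γ * c - 4) * u t + 2 * σ * κ * v t - 2 * ψ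
        + 2 * (-2 * σ * m + m ^ 2 / 2 - m' + σ * γ * c'))) t := by
  refine (((hu.sub (hv.const_mul σ)).pow 2).mul (hρ.pow 2)).congr_deriv ?_
  obtain rfl : φ = u t + m := by linarith
  simp only [Pi.sub_apply, Pi.pow_apply]
  push_cast
  ring

lemma differentiableAt_of_differentiableAt_sub_sq_mul_sq {w₀ w₁ r₀ r₁ m : ℝ → ℝ} {t : ℝ}
    (hw₀ : DifferentiableAt ℝ w₀ t) (hw₁ : DifferentiableAt ℝ w₁ t)
    (hr₀ : DifferentiableAt ℝ r₀ t) (hr₁ : DifferentiableAt ℝ r₁ t)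
    (h₀ : DifferentiableAt ℝ (fun s => (w₀ s - m s) ^ 2 * r₀ s ^ 2) t)
    (h₁ : DifferentiableAt ℝ (fun s => (w₁ s - m s) ^ 2 * r₁ s ^ 2) t)
    (hr₀t : r₀ t ≠ 0) (hr₁t : r₁ t ≠ 0) (hne : w₀ t ≠ w₁ t) : DifferentiableAt ℝ m t := by
  -- `(w₀ - m)² - (w₁ - m)² = (w₀ - w₁)(w₀ + w₁ - 2m)` is affine in `m`.
  have hD : DifferentiableAt ℝ (fun s => (r₀ s * r₁ s) ^ 2 * (w₀ s - w₁ s)) t :=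
    ((hr₀.mul hr₁).pow 2).mul (hw₀.sub hw₁)
  have hDt : (r₀ t * r₁ t) ^ 2 * (w₀ t - w₁ t) ≠ 0 := by
    simp [hr₀t, hr₁t, sub_ne_zero.2 hne]
  have hm : m =ᶠ[𝓝 t] fun s => (w₀ s + w₁ s - ((w₀ s - m s) ^ 2 * r₀ s ^ 2 * r₁ s ^ 2
      - (w₁ s - m s) ^ 2 * r₁ s ^ 2 * r₀ s ^ 2) / ((r₀ s * r₁ s) ^ 2 * (w₀ s - w₁ s))) / 2 := by
    filter_upwards [hD.continuousAt.eventually_ne hDt] with s hs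
    simp only [ne_eq, mul_eq_zero, pow_eq_zero_iff, sub_eq_zero, not_or, two_ne_zero,
      not_false_eq_true] at hs
    obtain ⟨⟨hr₀s, hr₁s⟩, hws⟩ := hs
    have := sub_ne_zero.2 hws
    field_simp
    ring
  refine DifferentiableAt.congr_of_eventuallyEq ?_ hm
  exact ((hw₀.add hw₁).sub
    (((h₀.mul (hr₁.pow 2)).sub (h₁.mul (hr₀.pow 2))).div hD hDt)).div_const 2

lemma antitoneOn_exp_mul_of_hasDerivAt {V V' : ℝ → ℝ} {σ : ℝ} {D : Set ℝ} (hD : Convex ℝ D)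
    (hV : ∀ t ∈ D, HasDerivAt V (V' t) t) (hle : ∀ t ∈ D, σ * V t + V' t ≤ 0) :
    AntitoneOn (fun t => exp (σ * t) * V t) D := by
  have hL : ∀ t ∈ D, HasDerivAt (fun t => exp (σ * t) * V t) (exp (σ * t) * (σ * V t + V' t)) t :=
    fun t ht => (((hasDerivAt_id t).const_mul σ).exp.mul (hV t ht)).congr_deriv (by simp only [id_eq, mul_one]; ring)
  refine antitoneOn_of_hasDerivWithinAt_nonpos hD
    (fun t ht => (hL t ht).continuousAt.continuousWithinAt)
    (fun t ht => (hL t (interior_subset ht)).hasDerivWithinAt) fun t ht => ?_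
  exact mul_nonpos_of_nonneg_of_nonpos (exp_nonneg _) (hle t (interior_subset ht))

lemma dissipation_rate_nonpos {σ H s c a b p q e estar : ℝ} (hσ : 0 ≤ σ) (hH : 0 < H)
    (hs : 0 < s) (hHc : H * c < s) (ha : 0 ≤ a) (hab : b ^ 2 ≤ a * (4 * H ^ 2))
    (hq : estar ≥ e + q + σ ^ 2 / 2 * (4 * H ^ 2)) :
    σ * (1 / 2 * (a - 2 * σ * b + σ ^ 2 * (4 * H ^ 2)) + (e - estar))
      + (1 / 2 * (σ * (2 * H / s * c - 4) * (a - σ * b)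
        + 2 * σ * (s / (4 * H) * b * (s - H * c) / (H * s ^ 2)) * (b - σ * (4 * H ^ 2))
        - 2 * (p - σ * q)) + p) ≤ 0 := by
  have hθ : 0 ≤ σ * (s - H * c) / (4 * H ^ 2 * s) :=
    div_nonneg (mul_nonneg hσ (sub_pos.2 hHc).le) (by positivity)
  calc _ = -(σ * a) / 2 + σ * (s - H * c) / (4 * H ^ 2 * s) * (b ^ 2 - a * (4 * H ^ 2))
        + σ * (e + q + σ ^ 2 / 2 * (4 * H ^ 2) - estar) := by
        field_simp
        ring
    _ ≤ 0 := by
      nlinarith [mul_nonneg hσ ha, mul_nonpos_of_nonneg_of_nonpos hθ (sub_nonpos.2 hab),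
        mul_nonpos_of_nonneg_of_nonpos hσ (sub_nonpos.2 hq)]

/-- In square-root coordinates `r = √ρ`, `rs = √ρ*` on the unit sphere of `L²(μ)`, `c` is the cosine
of the Fisher–Rao angle `H` between them and `τ` is the potential of the Fisher–Rao logarithm
`Log_ρ ρ*`. -/
structure IsFisherRaoLog (μ : Measure Ω) (r rs τ : Ω → ℝ) (c H : ℝ) : Prop where
  pos : ∀ x, 0 < r x
  integral_sq : ∫ x, r x ^ 2 ∂μ = 1
  integral_sq_target : ∫ x, rs x ^ 2 ∂μ = 1
  integral_mul_target : ∫ x, r x * rs x ∂μ = c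
  mem_Ioo : c ∈ Ioo 0 1
  angle_eq : H = arccos c
  eq : ∀ x, τ x = 2 * H / sin H * (rs x - r x * c) / r x
  memLp_sub : MemLp (fun x => (rs x / r x - c) * r x) 2 μ

namespace IsFisherRaoLog

variable {r rs τ f : Ω → ℝ} {c H : ℝ}

lemma angle_pos (h : IsFisherRaoLog μ r rs τ c H) : 0 < H := h.angle_eq ▸ arccos_pos.2 h.mem_Ioo.2

lemma sin_angle_sq (h : IsFisherRaoLog μ r rs τ c H) : sin H ^ 2 = 1 - c ^ 2 := by
  have := h.mem_Ioo
  rw [h.angle_eq, sin_arccos, sq_sqrt (by nlinarith [this.1, this.2])]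

lemma sin_angle_pos (h : IsFisherRaoLog μ r rs τ c H) : 0 < sin H :=
  sin_pos_of_pos_of_lt_pi h.angle_pos (h.angle_eq ▸ arccos_lt_pi_div_two.2 h.mem_Ioo.1 |>.trans
    (by linarith [pi_pos]))

lemma mul_lt_sin_angle (h : IsFisherRaoLog μ r rs τ c H) : H * c < sin H := by
  have hcos : cos H = c := by rw [h.angle_eq, cos_arccos (by linarith [h.mem_Ioo.1]) h.mem_Ioo.2.le]
  have := lt_tan h.angle_pos (h.angle_eq ▸ arccos_lt_pi_div_two.2 h.mem_Ioo.1)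
  rwa [tan_eq_sin_div_cos, hcos, lt_div_iff₀ h.mem_Ioo.1] at this

lemma integrable_sq (h : IsFisherRaoLog μ r rs τ c H) : Integrable (fun x => r x ^ 2) μ :=
  .of_integral_ne_zero (by simp [h.integral_sq])

lemma memLp (h : IsFisherRaoLog μ r rs τ c H) : MemLp r 2 μ := by
  have hmeas : AEStronglyMeasurable r μ :=
    (continuous_sqrt.comp_aestronglyMeasurable h.integrable_sq.aestronglyMeasurable).congr
      (ae_of_all _ fun x => sqrt_sq (h.pos x).le)
  exact (memLp_two_iff_integrable_sq hmeas).2 h.integrable_sq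

lemma mul_eq (h : IsFisherRaoLog μ r rs τ c H) (x : Ω) :
    τ x * r x = 2 * H / sin H * (rs x - r x * c) := by
  rw [h.eq]
  field_simp [(h.pos x).ne']

lemma memLp_mul (h : IsFisherRaoLog μ r rs τ c H) : MemLp (fun x => τ x * r x) 2 μ :=
  (h.memLp_sub.const_mul (2 * H / sin H)).ae_eq (ae_of_all _ fun x => by
    show _ = τ x * r x
    rw [h.mul_eq]
    field_simp [(h.pos x).ne'])

lemma memLp_target (h : IsFisherRaoLog μ r rs τ c H) : MemLp rs 2 μ :=
  (h.memLp_sub.add (h.memLp.const_mul c)).ae_eq (ae_of_all _ fun x => by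
    simp only [Pi.add_apply]
    field_simp [(h.pos x).ne']
    ring)

lemma integral_mul_sq_eq_zero (h : IsFisherRaoLog μ r rs τ c H) : ∫ x, τ x * r x ^ 2 ∂μ = 0 := by
  have := h.integrable_sq
  have := integrable_of_memLp_two_of_eq_mul h.memLp h.memLp_target fun x => rfl
  have hexp : ∀ x, τ x * r x ^ 2 = 2 * H / sin H * (r x * rs x) - 2 * H / sin H * c * r x ^ 2 :=
    fun x => by rw [sq, ← mul_assoc, h.mul_eq]; ring
  simp (disch := fun_prop) only [hexp, integral_sub, integral_const_mul, h.integral_mul_target,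
    h.integral_sq]
  ring

lemma integral_mul_pow_two_eq (h : IsFisherRaoLog μ r rs τ c H) :
    ∫ x, (τ x * r x) ^ 2 ∂μ = 4 * H ^ 2 := by
  have := h.integrable_sq
  have := h.memLp_target.integrable_sq
  have := integrable_of_memLp_two_of_eq_mul h.memLp h.memLp_target fun x => rfl
  set γ := 2 * H / sin H
  have hexp : ∀ x, (τ x * r x) ^ 2 =
      γ ^ 2 * rs x ^ 2 - 2 * γ ^ 2 * c * (r x * rs x) + γ ^ 2 * c ^ 2 * r x ^ 2 :=
    fun x => by rw [h.mul_eq]; ring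
  simp (disch := fun_prop) only [hexp, integral_add, integral_sub, integral_const_mul,
    h.integral_mul_target, h.integral_sq, h.integral_sq_target]
  have hγ : γ ^ 2 * sin H ^ 2 = 4 * H ^ 2 := by
    simp only [γ]
    field_simp [h.sin_angle_pos.ne']
    ring
  linear_combination hγ - γ ^ 2 * h.sin_angle_sq

lemma integral_mul_mul_target (h : IsFisherRaoLog μ r rs τ c H)
    (hf : MemLp (fun x => f x * r x) 2 μ) (hf₀ : ∫ x, f x * r x ^ 2 ∂μ = 0) :
    ∫ x, 1 / 2 * f x * r x * rs x ∂μ = sin H / (4 * H) * ∫ x, f x * r x * (τ x * r x) ∂μ := by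
  have := integrable_of_memLp_two_of_eq_mul hf h.memLp_mul fun x => rfl
  have := integrable_of_memLp_two_of_eq_mul hf h.memLp (w := fun x => f x * r x ^ 2)
    fun x => by ring
  have hexp : ∀ x, 1 / 2 * f x * r x * rs x =
      sin H / (4 * H) * (f x * r x * (τ x * r x)) + c / 2 * (f x * r x ^ 2) := fun x => by
    rw [h.mul_eq]
    field_simp [h.angle_pos.ne', h.sin_angle_pos.ne']
    ring
  simp (disch := fun_prop) only [hexp, integral_add, integral_const_mul, hf₀]
  ring

lemma integral_sub_const_mul_mul_sq (h : IsFisherRaoLog μ r rs τ c H) {ψ : Ω → ℝ}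
    (hψτ : Integrable (fun x => ψ x * τ x * r x ^ 2) μ) (a : ℝ) :
    ∫ x, (ψ x - a) * τ x * r x ^ 2 ∂μ = ∫ x, ψ x * τ x * r x ^ 2 ∂μ := by
  have := integrable_of_memLp_two_of_eq_mul h.memLp_mul h.memLp (w := fun x => τ x * r x ^ 2)
    fun x => by ring
  have hexp : ∀ x, (ψ x - a) * τ x * r x ^ 2 = ψ x * τ x * r x ^ 2 - a * (τ x * r x ^ 2) :=
    fun x => by ring
  simp (disch := fun_prop) only [hexp, integral_sub, integral_const_mul,
    h.integral_mul_sq_eq_zero, mul_zero, sub_zero]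

theorem dissipation_nonpos (h : IsFisherRaoLog μ r rs τ c H) {ψ g : Ω → ℝ} {σ c' C e estar : ℝ}
    (hf : MemLp (fun x => f x * r x) 2 μ) (hf₀ : ∫ x, f x * r x ^ 2 ∂μ = 0)
    (hψτ : Integrable (fun x => ψ x * τ x * r x ^ 2) μ)
    (hψf : Integrable (fun x => ψ x * f x * r x ^ 2) μ) (hσ : 0 ≤ σ)
    (hconv : estar ≥ e + (∫ x, (ψ x - ∫ y, ψ y * r y ^ 2 ∂μ) * τ x * r x ^ 2 ∂μ)
      + σ ^ 2 / 2 * ∫ x, τ x ^ 2 * r x ^ 2 ∂μ)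
    (hc' : ∫ x, 1 / 2 * f x * r x * rs x ∂μ = c')
    (hg : ∀ x, g x = (f x - σ * τ x) * r x ^ 2 * (σ * (2 * H / sin H * c - 4) * f x
      + 2 * σ * (c' * (sin H - H * c) / (H * sin H ^ 2)) * τ x - 2 * ψ x + C)) :
    σ * (1 / 2 * (∫ x, (f x - σ * τ x) ^ 2 * r x ^ 2 ∂μ) + (e - estar))
      + (1 / 2 * (∫ x, g x ∂μ) + ∫ x, ψ x * (f x * r x ^ 2) ∂μ) ≤ 0 := by
  have hv := h.memLp_mul
  have hff := hf.integrable_sq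
  have hττ := hv.integrable_sq
  have hfτ := integrable_of_memLp_two_of_eq_mul hf hv fun x => rfl
  have hfr := integrable_of_memLp_two_of_eq_mul hf h.memLp (w := fun x => f x * r x ^ 2)
    fun x => by ring
  have hτr := integrable_of_memLp_two_of_eq_mul hv h.memLp (w := fun x => τ x * r x ^ 2)
    fun x => by ring
  have hK : ∫ x, (f x - σ * τ x) ^ 2 * r x ^ 2 ∂μ
      = ∫ x, (f x * r x - σ * (τ x * r x)) ^ 2 ∂μ := by
    congr 1; funext x; ring
  have hgexp : ∀ x, g x =
      σ * (2 * H / sin H * c - 4) * ((f x * r x) ^ 2 - σ * (f x * r x * (τ x * r x)))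
      + 2 * σ * (c' * (sin H - H * c) / (H * sin H ^ 2))
        * (f x * r x * (τ x * r x) - σ * (τ x * r x) ^ 2)
      - 2 * (ψ x * f x * r x ^ 2 - σ * (ψ x * τ x * r x ^ 2))
      + C * (f x * r x ^ 2 - σ * (τ x * r x ^ 2)) := fun x => by rw [hg]; ring
  have hp : ∫ x, ψ x * (f x * r x ^ 2) ∂μ = ∫ x, ψ x * f x * r x ^ 2 ∂μ := by
    congr 1; funext x; ring
  simp only [← mul_pow, h.integral_sub_const_mul_mul_sq hψτ] at hconv
  rw [← hc', h.integral_mul_mul_target hf hf₀] at hgexp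
  have hab := sq_integral_mul_le hf hv
  rw [h.integral_mul_pow_two_eq] at hconv hab
  simp (disch := fun_prop) only [hK, hp, hgexp, integral_add, integral_sub, integral_const_mul,
    integral_sub_mul_sq hf hv, hf₀, h.integral_mul_sq_eq_zero, h.integral_mul_pow_two_eq,
    mul_zero, sub_zero, add_zero]
  exact dissipation_rate_nonpos hσ h.angle_pos h.sin_angle_pos h.mul_lt_sin_angle
    (integral_nonneg fun x => sq_nonneg _) hab hconv

end IsFisherRaoLog

theorem exists_deriv_kinetic_density_eq {R Φ Ψ F T : ℝ → Ω → ℝ} {Rstar : Ω → ℝ}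
    {c m H : ℝ → ℝ} {σ t c' : ℝ} (hF : ∀ s x, F s x = Φ s x - m s)
    (hH : ∀ s, H s = arccos (c s))
    (hT : ∀ s x, T s x = 2 * H s / sin (H s) * (Rstar x - R s x * c s) / R s x)
    (hlog : IsFisherRaoLog μ (R t) Rstar (T t) (c t) (H t))
    (hf : MemLp (fun x => F t x * R t x) 2 μ) (hf₀ : ∫ x, F t x * R t x ^ 2 ∂μ = 0)
    (hR : ∀ x, HasDerivAt (fun s => R s x) (1 / 2 * F t x * R t x) t)
    (hΦ : ∀ x, HasDerivAt (fun s => Φ s x)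
      (-(2 * σ * Φ t x + 1 / 2 * Φ t x ^ 2 - m t * Φ t x + Ψ t x)) t)
    (hc : HasDerivAt c c' t)
    (hG : ∀ x, DifferentiableAt ℝ (fun s => (F s x - σ * T s x) ^ 2 * R s x ^ 2) t) :
    ∃ C, ∀ x, deriv (fun s => (F s x - σ * T s x) ^ 2 * R s x ^ 2) t =
      (F t x - σ * T t x) * R t x ^ 2 * (σ * (2 * H t / sin (H t) * c t - 4) * F t x
        + 2 * σ * (c' * (sin (H t) - H t * c t) / (H t * sin (H t) ^ 2)) * T t x
        - 2 * Ψ t x + C) := by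
  have hγ := hasDerivAt_two_mul_div_sin_arccos hH hc
    ⟨by linarith [hlog.mem_Ioo.1], hlog.mem_Ioo.2⟩
  have hT' : ∀ x, HasDerivAt (fun s => T s x) _ t := fun x =>
    hasDerivAt_mul_sub_mul_div (fun s => hT s x) hγ (hR x) hc (hlog.pos x).ne'
  -- `m` need not be differentiable. If `Φ - σT` takes two values at time `t`, two densities pin
  -- `m` down near `t`; otherwise `F - σT` vanishes at time `t` and every density is minimal there.
  by_cases hm : DifferentiableAt ℝ m t
  · refine ⟨2 * (-2 * σ * m t + m t ^ 2 / 2 - deriv m t + σ * (2 * H t / sin (H t)) * c'),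
      fun x => ?_⟩
    have hF' : HasDerivAt (fun s => F s x)
        (-(2 * σ * Φ t x + 1 / 2 * Φ t x ^ 2 - m t * Φ t x + Ψ t x) - deriv m t) t := by
      simp only [hF]
      exact (hΦ x).sub hm.hasDerivAt
    exact (hasDerivAt_sub_mul_sq_mul_sq (hR x) hF' (hF t x) (hT' x)).deriv
  have hw : ∀ x, F t x - σ * T t x = 0 := by
    refine eq_zero_of_integral_mul_sq_eq_zero hlog.integral_sq ?_ fun x y => ?_
    · have := integrable_of_memLp_two_of_eq_mul hf hlog.memLp (w := fun x => F t x * R t x ^ 2)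
        fun x => by ring
      have := integrable_of_memLp_two_of_eq_mul hlog.memLp_mul hlog.memLp
        (w := fun x => T t x * R t x ^ 2) fun x => by ring
      have hexp : ∀ x, (F t x - σ * T t x) * R t x ^ 2
          = F t x * R t x ^ 2 - σ * (T t x * R t x ^ 2) := fun x => by ring
      simp (disch := fun_prop) only [hexp, integral_sub, integral_const_mul, hf₀,
        hlog.integral_mul_sq_eq_zero, mul_zero, sub_zero]
    · by_contra hne
      refine hm (differentiableAt_of_differentiableAt_sub_sq_mul_sq
        (w₀ := fun s => Φ s x - σ * T s x) (w₁ := fun s => Φ s y - σ * T s y)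
        ((hΦ x).differentiableAt.sub ((hT' x).differentiableAt.const_mul σ))
        ((hΦ y).differentiableAt.sub ((hT' y).differentiableAt.const_mul σ))
        (hR x).differentiableAt (hR y).differentiableAt ?_ ?_ (hlog.pos x).ne' (hlog.pos y).ne' ?_)
      · simpa only [hF, sub_right_comm] using hG x
      · simpa only [hF, sub_right_comm] using hG y
      · exact fun h => hne (by rw [hF, hF]; linarith)
  refine ⟨0, fun x => ?_⟩
  rw [hw x, zero_mul, zero_mul]
  refine IsLocalMin.deriv_eq_zero (Eventually.of_forall fun s => ?_)
  simp only [hw x, zero_pow two_ne_zero, zero_mul]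
  positivity

end

theorem fisher_rao_aig_strongly_convex_convergence_general
    {Ω : Type*} [MeasurableSpace Ω] (μ : Measure Ω)
    (β : ℝ) (hβ : 0 < β)
    (R Φ Ψ : ℝ → Ω → ℝ) (Rstar : Ω → ℝ) (e : ℝ → ℝ) (estar : ℝ)
    (c m H : ℝ → ℝ) (F T : ℝ → Ω → ℝ) (Ly : ℝ → ℝ)
    -- definitions
    (hc : ∀ t, c t = ∫ x, R t x * Rstar x ∂μ)
    (hm : ∀ t, m t = ∫ x, Φ t x * (R t x)^2 ∂μ)
    (hF : ∀ t x, F t x = Φ t x - m t)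
    (hH : ∀ t, H t = Real.arccos (c t))
    (hT : ∀ t x, T t x = (2 * H t / Real.sin (H t)) * (Rstar x - R t x * c t) / R t x)
    (hLy : ∀ t, Ly t = Real.exp (Real.sqrt β * t) *
      ((1/2) * (∫ x, (F t x - Real.sqrt β * T t x)^2 * (R t x)^2 ∂μ) + (e t - estar)))
    -- positivity and normalization
    (hRpos : ∀ t, 0 ≤ t → ∀ x, 0 < R t x)
    (hRnorm : ∀ t, 0 ≤ t → ∫ x, (R t x)^2 ∂μ = 1)
    (hRstarnorm : ∫ x, (Rstar x)^2 ∂μ = 1)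
    (hcIoo : ∀ t, 0 ≤ t → c t ∈ Set.Ioo (0:ℝ) 1)
    -- the Fisher–Rao AIG flow with damping 2√β in square-root coordinates
    (hflowR : ∀ t, 0 ≤ t → ∀ x,
      HasDerivAt (fun s => R s x) ((1/2) * F t x * R t x) t)
    (hflowΦ : ∀ t, 0 ≤ t → ∀ x,
      HasDerivAt (fun s => Φ s x)
        (-(2 * Real.sqrt β * Φ t x + (1/2) * (Φ t x)^2 - m t * Φ t x + Ψ t x)) t)
    -- chain rule for the energy: e'(t) = ∫ Ψ ∂ₜ(R²) dμ, with ∂ₜ(R²) = F R²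
    (he' : ∀ t, 0 ≤ t → HasDerivAt e (∫ x, Ψ t x * (F t x * (R t x)^2) ∂μ) t)
    -- derivative of c by differentiating under the integral sign
    (hc' : ∀ t, 0 ≤ t →
      HasDerivAt c (∫ x, ((1/2) * F t x * R t x) * Rstar x ∂μ) t)
    -- kinetic term: differentiation under the integral sign
    (hKdiff : ∀ t, 0 ≤ t → ∀ x, DifferentiableAt ℝ
      (fun s => (F s x - Real.sqrt β * T s x)^2 * (R s x)^2) t)
    (hK' : ∀ t, 0 ≤ t →
      HasDerivAt (fun s => ∫ x, (F s x - Real.sqrt β * T s x)^2 * (R s x)^2 ∂μ)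
        (∫ x, deriv (fun s => (F s x - Real.sqrt β * T s x)^2 * (R s x)^2) t ∂μ) t)
    -- L² memberships
    (hL2F : ∀ t, 0 ≤ t → MemLp (fun x => F t x * R t x) 2 μ)
    (hL2T : ∀ t, 0 ≤ t → MemLp (fun x => (Rstar x / R t x - c t) * R t x) 2 μ)
    -- β-strong geodesic convexity of the energy under the Fisher–Rao metric
    (hconv : ∀ t, 0 ≤ t → estar ≥ e t
      + (∫ x, (Ψ t x - ∫ y, Ψ t y * (R t y)^2 ∂μ) * T t x * (R t x)^2 ∂μ)
      + (β/2) * ∫ x, (T t x)^2 * (R t x)^2 ∂μ)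
    -- integrability of the integrals appearing
    (hint2 : ∀ t, 0 ≤ t → Integrable (fun x => Ψ t x * T t x * (R t x)^2) μ)
    (hint3 : ∀ t, 0 ≤ t → Integrable (fun x => Ψ t x * F t x * (R t x)^2) μ) :
    AntitoneOn Ly (Set.Ici 0) ∧
    ∀ t, 0 ≤ t → e t - estar ≤ Real.exp (-(Real.sqrt β * t)) * Ly 0 := by
  have hlog : ∀ t, 0 ≤ t → IsFisherRaoLog μ (R t) Rstar (T t) (c t) (H t) := fun t ht =>
    ⟨hRpos t ht, hRnorm t ht, hRstarnorm, (hc t).symm, hcIoo t ht, hH t, hT t, hL2T t ht⟩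
  have hF₀ : ∀ t, 0 ≤ t → ∫ x, F t x * R t x ^ 2 ∂μ = 0 := fun t ht => by
    simp only [hF, hm]
    exact integral_sub_integral_mul_sq (hRnorm t ht) <| integrable_of_memLp_two_of_eq_mul
      (hL2F t ht) (hlog t ht).memLp fun x => by rw [hF, hm]; ring
  have hanti : AntitoneOn Ly (Set.Ici 0) := by
    rw [funext hLy]
    refine antitoneOn_exp_mul_of_hasDerivAt (convex_Ici 0)
      (fun t ht => ((hK' t ht).const_mul (1 / 2)).add ((he' t ht).sub_const estar)) fun t ht => ?_
    obtain ⟨C, hC⟩ := exists_deriv_kinetic_density_eq hF hH hT (hlog t ht) (hL2F t ht) (hF₀ t ht)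
      (hflowR t ht) (hflowΦ t ht) (hc' t ht) (hKdiff t ht)
    exact (hlog t ht).dissipation_nonpos (hL2F t ht) (hF₀ t ht) (hint2 t ht) (hint3 t ht)
      (Real.sqrt_nonneg β) (by rw [Real.sq_sqrt hβ.le]; exact hconv t ht) rfl hC
  refine ⟨hanti, fun t ht => ?_⟩
  have hK : 0 ≤ ∫ x, (F t x - Real.sqrt β * T t x) ^ 2 * R t x ^ 2 ∂μ :=
    integral_nonneg fun x => by positivity
  calc e t - estar ≤ Real.exp (-(Real.sqrt β * t)) * Ly t := by
        rw [hLy, ← mul_assoc, ← Real.exp_add, neg_add_cancel, Real.exp_zero, one_mul]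
        linarith
    _ ≤ Real.exp (-(Real.sqrt β * t)) * Ly 0 :=
        mul_le_mul_of_nonneg_left (hanti Set.self_mem_Ici ht ht) (Real.exp_nonneg _)

/-- Convergence of the Fisher–Rao accelerated information gradient flow with damping
`α = 2√β` for a `β`-strongly (geodesically) convex energy: the Lyapunov function
`ℰ(t) = e^{√β t}(½∫(F − √βT)²R² dμ + e(t) − e*)` is non-increasing on `[0,∞)`, and
consequently `e(t) − e* ≤ e^{−√β t} ℰ(0)` for all `t ≥ 0`, i.e. an `O(e^{−√β t})`
convergence rate. -/
theorem fisher_rao_aig_strongly_convex_convergence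
    {Ω : Type*} [MeasurableSpace Ω] (μ : Measure Ω)
    (β : ℝ) (hβ : 0 < β)
    (R Φ Ψ : ℝ → Ω → ℝ) (Rstar : Ω → ℝ) (e : ℝ → ℝ) (estar : ℝ)
    (c m H : ℝ → ℝ) (F T : ℝ → Ω → ℝ) (Ly : ℝ → ℝ)
    -- definitions
    (hc : ∀ t, c t = ∫ x, R t x * Rstar x ∂μ)
    (hm : ∀ t, m t = ∫ x, Φ t x * (R t x)^2 ∂μ)
    (hF : ∀ t x, F t x = Φ t x - m t)
    (hH : ∀ t, H t = Real.arccos (c t))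
    (hT : ∀ t x, T t x = (2 * H t / Real.sin (H t)) * (Rstar x - R t x * c t) / R t x)
    (hLy : ∀ t, Ly t = Real.exp (Real.sqrt β * t) *
      ((1/2) * (∫ x, (F t x - Real.sqrt β * T t x)^2 * (R t x)^2 ∂μ) + (e t - estar)))
    -- positivity and normalization
    (hRpos : ∀ t, 0 ≤ t → ∀ x, 0 < R t x)
    (hRnorm : ∀ t, 0 ≤ t → ∫ x, (R t x)^2 ∂μ = 1)
    (hRstarnorm : ∫ x, (Rstar x)^2 ∂μ = 1)
    (hcIoo : ∀ t, 0 ≤ t → c t ∈ Set.Ioo (0:ℝ) 1)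
    -- the Fisher–Rao AIG flow with damping 2√β in square-root coordinates
    (hflowR : ∀ t, 0 ≤ t → ∀ x,
      HasDerivAt (fun s => R s x) ((1/2) * F t x * R t x) t)
    (hflowΦ : ∀ t, 0 ≤ t → ∀ x,
      HasDerivAt (fun s => Φ s x)
        (-(2 * Real.sqrt β * Φ t x + (1/2) * (Φ t x)^2 - m t * Φ t x + Ψ t x)) t)
    -- chain rule for the energy: e'(t) = ∫ Ψ ∂ₜ(R²) dμ, with ∂ₜ(R²) = F R²
    (he' : ∀ t, 0 ≤ t → HasDerivAt e (∫ x, Ψ t x * (F t x * (R t x)^2) ∂μ) t)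
    -- derivative of c by differentiating under the integral sign
    (hc' : ∀ t, 0 ≤ t →
      HasDerivAt c (∫ x, ((1/2) * F t x * R t x) * Rstar x ∂μ) t)
    -- kinetic term: differentiation under the integral sign
    (hKdiff : ∀ t, 0 ≤ t → ∀ x, DifferentiableAt ℝ
      (fun s => (F s x - Real.sqrt β * T s x)^2 * (R s x)^2) t)
    (hK' : ∀ t, 0 ≤ t →
      HasDerivAt (fun s => ∫ x, (F s x - Real.sqrt β * T s x)^2 * (R s x)^2 ∂μ)
        (∫ x, deriv (fun s => (F s x - Real.sqrt β * T s x)^2 * (R s x)^2) t ∂μ) t)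
    -- L² memberships
    (hL2F : ∀ t, 0 ≤ t → MemLp (fun x => F t x * R t x) 2 μ)
    (hL2T : ∀ t, 0 ≤ t → MemLp (fun x => (Rstar x / R t x - c t) * R t x) 2 μ)
    -- β-strong geodesic convexity of the energy under the Fisher–Rao metric
    (hconv : ∀ t, 0 ≤ t → estar ≥ e t
      + (∫ x, (Ψ t x - ∫ y, Ψ t y * (R t y)^2 ∂μ) * T t x * (R t x)^2 ∂μ)
      + (β/2) * ∫ x, (T t x)^2 * (R t x)^2 ∂μ)
    -- integrability of the integrals appearing
    (hint1 : ∀ t, 0 ≤ t →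
      Integrable (fun x => (F t x - Real.sqrt β * T t x)^2 * (R t x)^2) μ)
    (hint2 : ∀ t, 0 ≤ t → Integrable (fun x => Ψ t x * T t x * (R t x)^2) μ)
    (hint3 : ∀ t, 0 ≤ t → Integrable (fun x => Ψ t x * F t x * (R t x)^2) μ)
    (hint4 : ∀ t, 0 ≤ t → Integrable (fun x => (T t x)^2 * (R t x)^2) μ)
    (hint5 : ∀ t, 0 ≤ t → Integrable
      (fun x => deriv (fun s => (F s x - Real.sqrt β * T s x)^2 * (R s x)^2) t) μ) :
    AntitoneOn Ly (Set.Ici 0) ∧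
    ∀ t, 0 ≤ t → e t - estar ≤ Real.exp (-(Real.sqrt β * t)) * Ly 0 :=
  fisher_rao_aig_strongly_convex_convergence_general μ β hβ R Φ Ψ Rstar e estar c m H F T Ly hc hm
    hF hH hT hLy hRpos hRnorm hRstarnorm hcIoo hflowR hflowΦ he' hc' hKdiff hK' hL2F hL2T hconv
    hint2 hint3
end

section
/- For every t, the following inequality holds: ∫ ∂_tT(t,x) · F(t,x) · R(t,x)² dμ(x) + ½ ∫ T(t,x) · F(t,x)² · R(t,x)² dμ(x) ≥ − ∫ F(t,x)² · R(t,x)² dμ(x). -/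
/-!
Write `θ = arccos c` and `s = sin θ = √(1 - c²)`. Because `∫ F R² = 0`, the terms of `∂ₜT · F R²`
carrying `R* F² R` cancel against `½ T F² R²`, and the left-hand side collapses to
`2 κ'(c) c'² - κ(c) c I / 2`, where `T = κ(c) (R*/R - c)`, `I = ∫ F² R²` and
`c' = ½ ∫ (R* - c R) F R`. Adding `I` gives `(s - θ c)(s² I - 4 c'²) / s³`: the first factor is
positive since `tan θ > θ` on `(0, π/2)`, the second is nonnegative by Cauchy–Schwarz, as
`∫ (R* - c R)² = s²`.
-/

open MeasureTheory Real Set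

/-- The prefactor `2 H / sin H` of `T`, as a function of `c = cos H`. -/
noncomputable def transportFactor (c : ℝ) : ℝ := 2 * arccos c / √(1 - c ^ 2)

noncomputable def transportFactorDeriv (c : ℝ) : ℝ :=
  -2 * (√(1 - c ^ 2) - c * arccos c) / √(1 - c ^ 2) ^ 3

lemma hasDerivAt_transportFactor {c : ℝ} (hc : c ∈ Ioo (-1 : ℝ) 1) :
    HasDerivAt transportFactor (transportFactorDeriv c) c := by
  obtain ⟨hc₀, hc₁⟩ := hc
  have hpos : 0 < 1 - c ^ 2 := by nlinarith
  have hsqrt := ((hasDerivAt_pow 2 c).const_sub 1).sqrt hpos.ne'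
  have hs := sqrt_pos.2 hpos
  refine (((hasDerivAt_arccos hc₀.ne' hc₁.ne).const_mul 2).div hsqrt hs.ne').congr_deriv ?_
  rw [transportFactorDeriv]
  field_simp
  norm_num
  ring

lemma mul_arccos_lt_sqrt {c : ℝ} (hc : c ∈ Ioo (0 : ℝ) 1) : c * arccos c < √(1 - c ^ 2) := by
  have h := lt_tan (arccos_pos.2 hc.2) (arccos_lt_pi_div_two.2 hc.1)
  rw [tan_arccos, lt_div_iff₀ hc.1] at h
  linarith

lemma neg_le_transport_quadratic {c d I : ℝ} (hc : c ∈ Ioo (0 : ℝ) 1)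
    (hd : (2 * d) ^ 2 ≤ (1 - c ^ 2) * I) :
    -I ≤ 2 * transportFactorDeriv c * d ^ 2 - transportFactor c * c / 2 * I := by
  have hgap := mul_arccos_lt_sqrt hc
  have hpos : 0 < 1 - c ^ 2 := by nlinarith [hc.1, hc.2]
  have hs := sqrt_pos.2 hpos
  rw [← sq_sqrt hpos.le] at hd
  unfold transportFactor transportFactorDeriv
  generalize √(1 - c ^ 2) = s at *
  have hid : 2 * (-2 * (s - c * arccos c) / s ^ 3) * d ^ 2 - 2 * arccos c / s * c / 2 * I + I
      = (s - c * arccos c) * (s ^ 2 * I - (2 * d) ^ 2) / s ^ 3 := by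
    field_simp
    ring
  have := div_nonneg (mul_nonneg (sub_nonneg.2 hgap.le) (sub_nonneg.2 hd)) (pow_nonneg hs.le 3)
  linarith

lemma hasDerivAt_transport {c R : ℝ → ℝ} {c' R' a t : ℝ} (hc : HasDerivAt c c' t)
    (hct : c t ∈ Ioo (-1 : ℝ) 1) (hR : HasDerivAt R R' t) (hRt : R t ≠ 0) :
    HasDerivAt (fun s => transportFactor (c s) * (a / R s - c s))
      (transportFactorDeriv (c t) * c' * (a / R t - c t)
        + transportFactor (c t) * (-(a * R') / R t ^ 2 - c')) t :=
  (((hasDerivAt_transportFactor hct).comp t hc).mul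
    (((hasDerivAt_const t a).div hR hRt).sub hc)).congr_deriv
      (by simp only [Function.comp_apply, Pi.div_apply, Pi.sub_apply]; ring)

section Integrals

variable {Ω : Type*} [MeasurableSpace Ω] {μ : Measure Ω}

lemma integral_mul_sq_le_integral_sq_mul_integral_sq {f g : Ω → ℝ}
    (hf : MemLp f 2 μ) (hg : MemLp g 2 μ) :
    (∫ x, f x * g x ∂μ) ^ 2 ≤ (∫ x, f x ^ 2 ∂μ) * ∫ x, g x ^ 2 ∂μ := by
  have toLp_inner (u v : Ω → ℝ) (hu : MemLp u 2 μ) (hv : MemLp v 2 μ) :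
      ∫ x, u x * v x ∂μ = inner ℝ (hu.toLp u) (hv.toLp v) := by
    rw [L2.inner_def]
    refine integral_congr_ae ?_
    filter_upwards [hu.coeFn_toLp, hv.coeFn_toLp] with x hux hvx
    simp [hux, hvx, mul_comm]
  simp only [sq]
  rw [toLp_inner f g hf hg, toLp_inner f f hf hf, toLp_inner g g hg hg]
  exact real_inner_mul_inner_self_le _ _

lemma memLp_two_of_nonneg_of_integral_sq_ne_zero {f : Ω → ℝ} (hf : ∀ x, 0 ≤ f x)
    (h : ∫ x, f x ^ 2 ∂μ ≠ 0) : MemLp f 2 μ := by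
  have hint := Integrable.of_integral_ne_zero h
  have hmeas : AEStronglyMeasurable f μ :=
    (continuous_sqrt.comp_aestronglyMeasurable hint.aestronglyMeasurable).congr
      (.of_forall fun x => sqrt_sq (hf x))
  exact (memLp_two_iff_integrable_sq hmeas).2 hint

lemma integral_sq_sub_integral_mul_mul {r g : Ω → ℝ} (hr : MemLp r 2 μ) (hg : MemLp g 2 μ)
    (hr1 : ∫ x, r x ^ 2 ∂μ = 1) :
    ∫ x, (g x - (∫ y, r y * g y ∂μ) * r x) ^ 2 ∂μ
      = ∫ x, g x ^ 2 ∂μ - (∫ x, r x * g x ∂μ) ^ 2 := by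
  set c := ∫ x, r x * g x ∂μ
  have hrg : Integrable (fun x => r x * g x) μ := hr.integrable_mul hg
  have hlin : Integrable (fun x => g x ^ 2 - 2 * c * (r x * g x)) μ :=
    hg.integrable_sq.sub (hrg.const_mul _)
  calc ∫ x, (g x - c * r x) ^ 2 ∂μ
      = ∫ x, (g x ^ 2 - 2 * c * (r x * g x)) + c ^ 2 * r x ^ 2 ∂μ := by
        congr 1; funext x; ring
    _ = ∫ x, g x ^ 2 ∂μ - 2 * c * c + c ^ 2 * 1 := by
        rw [integral_add hlin (hr.integrable_sq.const_mul _),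
          integral_sub hg.integrable_sq (hrg.const_mul _), integral_const_mul, integral_const_mul,
          hr1]
    _ = ∫ x, g x ^ 2 ∂μ - c ^ 2 := by ring

lemma integral_mul_sq_eq_zero_of_centered {φ f r : Ω → ℝ} {m : ℝ}
    (hr : Integrable (fun x => r x ^ 2) μ) (hr1 : ∫ x, r x ^ 2 ∂μ = 1)
    (hfr : Integrable (fun x => f x * r x ^ 2) μ) (hf : ∀ x, f x = φ x - m)
    (hm : m = ∫ x, φ x * r x ^ 2 ∂μ) :
    ∫ x, f x * r x ^ 2 ∂μ = 0 := by
  have hφ : (fun x => φ x * r x ^ 2) = fun x => f x * r x ^ 2 + m * r x ^ 2 := by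
    funext x; rw [hf]; ring
  rw [hφ, integral_add hfr (hr.const_mul _), integral_const_mul, hr1] at hm
  linarith

lemma integrable_mul_sq_of_memLp {r f : Ω → ℝ} (hr : MemLp r 2 μ)
    (hfr : MemLp (fun x => f x * r x) 2 μ) : Integrable (fun x => f x * r x ^ 2) μ :=
  (hfr.integrable_mul hr).congr (.of_forall fun x => by simp only [Pi.mul_apply]; ring)

lemma integral_half_mul_mul_eq {r rs f : Ω → ℝ} {c : ℝ} (hr : MemLp r 2 μ)
    (hfr : MemLp (fun x => f x * r x) 2 μ) (hG : MemLp (fun x => rs x - c * r x) 2 μ)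
    (hf0 : ∫ x, f x * r x ^ 2 ∂μ = 0) :
    ∫ x, (1 / 2) * f x * r x * rs x ∂μ
      = (1 / 2) * ∫ x, (rs x - c * r x) * (f x * r x) ∂μ := by
  have hGP : Integrable (fun x => (rs x - c * r x) * (f x * r x)) μ := hG.integrable_mul hfr
  calc ∫ x, (1 / 2) * f x * r x * rs x ∂μ
      = ∫ x, (1 / 2) * ((rs x - c * r x) * (f x * r x)) + c / 2 * (f x * r x ^ 2) ∂μ := by
        congr 1; funext x; ring
    _ = (1 / 2) * ∫ x, (rs x - c * r x) * (f x * r x) ∂μ := by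
        rw [integral_add (hGP.const_mul _) ((integrable_mul_sq_of_memLp hr hfr).const_mul _),
          integral_const_mul, integral_const_mul, hf0, mul_zero, add_zero]

lemma integral_transport_eq {r rs f D τ : Ω → ℝ} {c d k k' : ℝ} (hr : ∀ x, r x ≠ 0)
    (hD : ∀ x, D x = k' * d * (rs x / r x - c)
      + k * (-(rs x * ((1 / 2) * f x * r x)) / r x ^ 2 - d))
    (hτ : ∀ x, τ x = k * (rs x / r x - c))
    (hDint : Integrable (fun x => D x * f x * r x ^ 2) μ)
    (hτint : Integrable (fun x => τ x * f x ^ 2 * r x ^ 2) μ)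
    (hGP : Integrable (fun x => (rs x - c * r x) * (f x * r x)) μ)
    (hfr : Integrable (fun x => f x * r x ^ 2) μ) (hfr2 : Integrable (fun x => (f x * r x) ^ 2) μ)
    (hf0 : ∫ x, f x * r x ^ 2 ∂μ = 0) :
    (∫ x, D x * f x * r x ^ 2 ∂μ) + (1 / 2) * ∫ x, τ x * f x ^ 2 * r x ^ 2 ∂μ
      = k' * d * (∫ x, (rs x - c * r x) * (f x * r x) ∂μ)
        - k * c / 2 * ∫ x, (f x * r x) ^ 2 ∂μ := by
  have hpoint : ∀ x, D x * f x * r x ^ 2 + (1 / 2) * (τ x * f x ^ 2 * r x ^ 2)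
      = k' * d * ((rs x - c * r x) * (f x * r x)) - k * d * (f x * r x ^ 2)
        - k * c / 2 * (f x * r x) ^ 2 := by
    intro x
    rw [hD, hτ]
    field_simp [hr x]
    ring
  have hlin : Integrable
      (fun x => k' * d * ((rs x - c * r x) * (f x * r x)) - k * d * (f x * r x ^ 2)) μ :=
    (hGP.const_mul _).sub (hfr.const_mul _)
  rw [← integral_const_mul, ← integral_add hDint (hτint.const_mul _),
    integral_congr_ae (.of_forall hpoint), integral_sub hlin (hfr2.const_mul _),
    integral_sub (hGP.const_mul _) (hfr.const_mul _), integral_const_mul, integral_const_mul,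
    integral_const_mul, hf0]
  ring

/-- At a fixed time `t`: `r = R(t, ·)`, `rs = R*`, `f = F(t, ·)`, `d = c'(t)`,
`τ = T(t, ·)` and `D = ∂ₜT(t, ·)`. -/
lemma neg_integral_le_integral_transport {r rs f D τ : Ω → ℝ} {c d : ℝ}
    (hr : ∀ x, 0 < r x) (hrL2 : MemLp r 2 μ) (hr1 : ∫ x, r x ^ 2 ∂μ = 1)
    (hrs1 : ∫ x, rs x ^ 2 ∂μ = 1) (hc : c = ∫ x, r x * rs x ∂μ) (hcI : c ∈ Ioo (0 : ℝ) 1)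
    (hd : d = ∫ x, (1 / 2) * f x * r x * rs x ∂μ) (hf0 : ∫ x, f x * r x ^ 2 ∂μ = 0)
    (hfr : MemLp (fun x => f x * r x) 2 μ) (hG : MemLp (fun x => (rs x / r x - c) * r x) 2 μ)
    (hD : ∀ x, D x = transportFactorDeriv c * d * (rs x / r x - c)
      + transportFactor c * (-(rs x * ((1 / 2) * f x * r x)) / r x ^ 2 - d))
    (hτ : ∀ x, τ x = transportFactor c * (rs x / r x - c))
    (hDint : Integrable (fun x => D x * f x * r x ^ 2) μ)
    (hτint : Integrable (fun x => τ x * f x ^ 2 * r x ^ 2) μ) :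
    -∫ x, f x ^ 2 * r x ^ 2 ∂μ ≤
      (∫ x, D x * f x * r x ^ 2 ∂μ) + (1 / 2) * ∫ x, τ x * f x ^ 2 * r x ^ 2 ∂μ := by
  have hG' : MemLp (fun x => rs x - c * r x) 2 μ :=
    hG.ae_eq (.of_forall fun x => by field_simp [(hr x).ne'])
  have hrsL2 : MemLp rs 2 μ :=
    (hG'.add (hrL2.const_mul c)).ae_eq (.of_forall fun x => by simp)
  have hGG : ∫ x, (rs x - c * r x) ^ 2 ∂μ = 1 - c ^ 2 := by
    simpa only [← hc, hrs1] using integral_sq_sub_integral_mul_mul hrL2 hrsL2 hr1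
  have hGP : ∫ x, (rs x - c * r x) * (f x * r x) ∂μ = 2 * d := by
    rw [hd, integral_half_mul_mul_eq hrL2 hfr hG' hf0]
    ring
  have hCS := integral_mul_sq_le_integral_sq_mul_integral_sq hG' hfr
  rw [hGP, hGG] at hCS
  have hI : ∫ x, f x ^ 2 * r x ^ 2 ∂μ = ∫ x, (f x * r x) ^ 2 ∂μ := by simp only [mul_pow]
  rw [integral_transport_eq (fun x => (hr x).ne') hD hτ hDint hτint (hG'.integrable_mul hfr)
    (integrable_mul_sq_of_memLp hrL2 hfr) hfr.integrable_sq hf0, hGP, hI]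
  linarith [neg_le_transport_quadratic hcI hCS]

end Integrals

theorem fisher_rao_transport_derivative_inequality_general
    {Ω : Type*} [MeasurableSpace Ω] (μ : Measure Ω)
    (R Φ : ℝ → Ω → ℝ) (Rstar : Ω → ℝ)
    (c m H : ℝ → ℝ) (F T : ℝ → Ω → ℝ)
    (hRstarnorm : ∫ x, (Rstar x)^2 ∂μ = 1)
    (hRpos : ∀ t x, 0 < R t x)
    (hRnorm : ∀ t, ∫ x, (R t x)^2 ∂μ = 1)
    (hm : ∀ t, m t = ∫ x, Φ t x * (R t x)^2 ∂μ)
    (hF : ∀ t x, F t x = Φ t x - m t)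
    (hflowR : ∀ t x, HasDerivAt (fun s => R s x) ((1/2) * F t x * R t x) t)
    (hc : ∀ t, c t = ∫ x, R t x * Rstar x ∂μ)
    (hcIoo : ∀ t, c t ∈ Set.Ioo (0:ℝ) 1)
    (hH : ∀ t, H t = Real.arccos (c t))
    (hT : ∀ t x, T t x = (2 * H t / Real.sin (H t)) * (Rstar x - R t x * c t) / R t x)
    (hc' : ∀ t, HasDerivAt c (∫ x, ((1/2) * F t x * R t x) * Rstar x ∂μ) t)
    (hL2F : ∀ t, MemLp (fun x => F t x * R t x) 2 μ)
    (hL2T : ∀ t, MemLp (fun x => (Rstar x / R t x - c t) * R t x) 2 μ)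
    (hint1 : ∀ t, Integrable (fun x => deriv (fun s => T s x) t * F t x * (R t x)^2) μ)
    (hint2 : ∀ t, Integrable (fun x => T t x * (F t x)^2 * (R t x)^2) μ) :
    ∀ t : ℝ,
      (∫ x, deriv (fun s => T s x) t * F t x * (R t x)^2 ∂μ)
        + (1/2) * ∫ x, T t x * (F t x)^2 * (R t x)^2 ∂μ
      ≥ - ∫ x, (F t x)^2 * (R t x)^2 ∂μ := by
  intro t
  have hT' : ∀ s x, T s x = transportFactor (c s) * (Rstar x / R s x - c s) := by
    intro s x
    rw [hT, hH, sin_arccos, transportFactor]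
    field_simp [(hRpos s x).ne']
  have hcI : c t ∈ Ioo (-1 : ℝ) 1 := ⟨by linarith [(hcIoo t).1], (hcIoo t).2⟩
  have hR2 : MemLp (R t) 2 μ :=
    memLp_two_of_nonneg_of_integral_sq_ne_zero (fun x => (hRpos t x).le) (by simp [hRnorm t])
  have hF0 : ∫ x, F t x * R t x ^ 2 ∂μ = 0 :=
    integral_mul_sq_eq_zero_of_centered hR2.integrable_sq (hRnorm t)
      (integrable_mul_sq_of_memLp hR2 (hL2F t)) (hF t) (hm t)
  refine neg_integral_le_integral_transport (hRpos t) hR2 (hRnorm t) hRstarnorm (hc t) (hcIoo t)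
    rfl hF0 (hL2F t) (hL2T t) (fun x => ?_) (hT' t) (hint1 t) (hint2 t)
  simp only [hT']
  exact (hasDerivAt_transport (hc' t) hcI (hflowR t x) (hRpos t x).ne').deriv

/-- Key inequality in the Fisher–Rao Lyapunov analysis:
`∫ ∂ₜT · F · R² dμ + ½ ∫ T · F² · R² dμ ≥ −∫ F² · R² dμ`. -/
theorem fisher_rao_transport_derivative_inequality
    {Ω : Type*} [MeasurableSpace Ω] (μ : Measure Ω)
    (R Φ : ℝ → Ω → ℝ) (Rstar : Ω → ℝ)
    (c m H : ℝ → ℝ) (F T : ℝ → Ω → ℝ)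
    (hRstarnorm : ∫ x, (Rstar x)^2 ∂μ = 1)
    (hRpos : ∀ t x, 0 < R t x)
    (hRnorm : ∀ t, ∫ x, (R t x)^2 ∂μ = 1)
    (hΦdiff : ∀ t x, DifferentiableAt ℝ (fun s => Φ s x) t)
    (hm : ∀ t, m t = ∫ x, Φ t x * (R t x)^2 ∂μ)
    (hF : ∀ t x, F t x = Φ t x - m t)
    (hflowR : ∀ t x, HasDerivAt (fun s => R s x) ((1/2) * F t x * R t x) t)
    (hc : ∀ t, c t = ∫ x, R t x * Rstar x ∂μ)
    (hcIoo : ∀ t, c t ∈ Set.Ioo (0:ℝ) 1)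
    (hH : ∀ t, H t = Real.arccos (c t))
    (hT : ∀ t x, T t x = (2 * H t / Real.sin (H t)) * (Rstar x - R t x * c t) / R t x)
    (hc' : ∀ t, HasDerivAt c (∫ x, ((1/2) * F t x * R t x) * Rstar x ∂μ) t)
    (hL2F : ∀ t, MemLp (fun x => F t x * R t x) 2 μ)
    (hL2T : ∀ t, MemLp (fun x => (Rstar x / R t x - c t) * R t x) 2 μ)
    (hint1 : ∀ t, Integrable (fun x => deriv (fun s => T s x) t * F t x * (R t x)^2) μ)
    (hint2 : ∀ t, Integrable (fun x => T t x * (F t x)^2 * (R t x)^2) μ)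
    (hint3 : ∀ t, Integrable (fun x => (F t x)^2 * (R t x)^2) μ) :
    ∀ t : ℝ,
      (∫ x, deriv (fun s => T s x) t * F t x * (R t x)^2 ∂μ)
        + (1/2) * ∫ x, T t x * (F t x)^2 * (R t x)^2 ∂μ
      ≥ - ∫ x, (F t x)^2 * (R t x)^2 ∂μ :=
  fisher_rao_transport_derivative_inequality_general μ R Φ Rstar c m H F T hRstarnorm hRpos hRnorm
    hm hF hflowR hc hcIoo hH hT hc' hL2F hL2T hint1 hint2
end

section
/- For every t, the following identity holds: ∫ ∂_tT(t,x) · T(t,x) · R(t,x)² dμ(x) = − ∫ T(t,x) · Φ(t,x) · R(t,x)² dμ(x) − ½ ∫ T(t,x)² · F(t,x) · R(t,x)² dμ(x). -/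
/-!
With `u = R* − c R` one has `T = L(c) · u / R`, where `L(c) = 2 arccos c / √(1 − c²)`, and the flow
gives `∂ₜ(R*/R) = −½ F R*/R`. Expanding `∂ₜT · T · R²` leaves, besides `−½ T² F R²`, multiples of
`∫ u² = 1 − c²`, `∫ u R = 0` and `∫ (F R) u = ∫ F R R* = 2 c'` (since `∫ F R² = 0`), while
`∫ T Φ R² = 2 L c'`. The identity then reduces to the ODE `(1 − c²) L'(c) = c L(c) − 2`.
-/

open MeasureTheory Real

/-- `2H / sin H` as a function of `c = cos H`. -/
noncomputable def sphereLogCoeff (c : ℝ) : ℝ := 2 * arccos c / sin (arccos c)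

theorem hasDerivAt_sphereLogCoeff {c : ℝ} (h₁ : -1 < c) (h₂ : c < 1) :
    HasDerivAt sphereLogCoeff ((c * sphereLogCoeff c - 2) / (1 - c ^ 2)) c := by
  have hpos : 0 < 1 - c ^ 2 := by nlinarith
  have hsqrt : √(1 - c ^ 2) ≠ 0 := (sqrt_pos.2 hpos).ne'
  have hnum := (hasDerivAt_arccos h₁.ne' h₂.ne).const_mul 2
  have hden := ((hasDerivAt_pow 2 c).const_sub 1).sqrt hpos.ne'
  have heq : sphereLogCoeff = fun y => 2 * arccos y / √(1 - y ^ 2) := by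
    funext y; rw [sphereLogCoeff, sin_arccos]
  rw [heq]
  refine (hnum.div hden hsqrt).congr_deriv ?_
  field_simp
  rw [sq_sqrt hpos.le]
  ring

theorem hasDerivAt_sphereLogCoeff_mul_div_sub {r c : ℝ → ℝ} {a f c' t : ℝ}
    (hr : HasDerivAt r (1 / 2 * f * r t) t) (hr₀ : r t ≠ 0) (hc : HasDerivAt c c' t)
    (h₁ : -1 < c t) (h₂ : c t < 1) :
    HasDerivAt (fun s => sphereLogCoeff (c s) * (a / r s - c s))
      ((c t * sphereLogCoeff (c t) - 2) / (1 - c t ^ 2) * c' * (a / r t - c t)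
        + sphereLogCoeff (c t) * (-(1 / 2) * f * (a / r t) - c')) t := by
  have hL := (hasDerivAt_sphereLogCoeff h₁ h₂).comp t hc
  have hw := ((hasDerivAt_const t a).div hr hr₀).sub hc
  refine (hL.mul hw).congr_deriv ?_
  simp only [Function.comp_apply, Pi.div_apply, Pi.sub_apply]
  field_simp
  ring

section FixedTime

variable {Ω : Type*} [MeasurableSpace Ω] {μ : Measure Ω} {r ρ f φ : Ω → ℝ} {c m : ℝ}

theorem memLp_two_of_nonneg_of_integral_sq_ne_zero_s3 (h₀ : ∀ x, 0 ≤ r x)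
    (h : ∫ x, r x ^ 2 ∂μ ≠ 0) : MemLp r 2 μ := by
  have hsq : Integrable (fun x => r x ^ 2) μ := Integrable.of_integral_ne_zero h
  have hmeas : AEStronglyMeasurable r μ := by
    have : r = fun x => √(r x ^ 2) := funext fun x => (sqrt_sq (h₀ x)).symm
    rw [this]
    exact continuous_sqrt.comp_aestronglyMeasurable hsq.aestronglyMeasurable
  exact (memLp_two_iff_integrable_sq hmeas).2 hsq

theorem integral_sub_mul_sq_s3 (hr : MemLp r 2 μ) (hρ : MemLp ρ 2 μ) (hρ₁ : ∫ x, ρ x ^ 2 ∂μ = 1)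
    (hr₁ : ∫ x, r x ^ 2 ∂μ = 1) (hc : c = ∫ x, r x * ρ x ∂μ) :
    ∫ x, (ρ x - c * r x) ^ 2 ∂μ = 1 - c ^ 2 := by
  have hrρ : Integrable (fun x => r x * ρ x) μ := hr.integrable_mul hρ
  have hrr : Integrable (fun x => r x ^ 2) μ := hr.integrable_sq
  have hρρ : Integrable (fun x => ρ x ^ 2) μ := hρ.integrable_sq
  calc ∫ x, (ρ x - c * r x) ^ 2 ∂μ
      = ∫ x, ρ x ^ 2 - 2 * c * (r x * ρ x) + c ^ 2 * r x ^ 2 ∂μ := by congr 1; ext x; ring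
    _ = 1 - c ^ 2 := by
      rw [integral_add (by fun_prop) (by fun_prop), integral_sub (by fun_prop) (by fun_prop),
        integral_const_mul, integral_const_mul, hρ₁, hr₁, ← hc]
      ring

theorem integral_sub_mul_mul_eq_zero (hr : MemLp r 2 μ) (hρ : MemLp ρ 2 μ)
    (hr₁ : ∫ x, r x ^ 2 ∂μ = 1) (hc : c = ∫ x, r x * ρ x ∂μ) :
    ∫ x, (ρ x - c * r x) * r x ∂μ = 0 := by
  have hrρ : Integrable (fun x => r x * ρ x) μ := hr.integrable_mul hρ
  have hrr : Integrable (fun x => r x ^ 2) μ := hr.integrable_sq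
  calc ∫ x, (ρ x - c * r x) * r x ∂μ = ∫ x, r x * ρ x - c * r x ^ 2 ∂μ := by
        congr 1; ext x; ring
    _ = 0 := by rw [integral_sub hrρ (by fun_prop), integral_const_mul, hr₁, ← hc]; ring

theorem integral_mul_sub_mul (hfr : MemLp (fun x => f x * r x) 2 μ) (hr : MemLp r 2 μ)
    (hρ : MemLp ρ 2 μ) (hr₁ : ∫ x, r x ^ 2 ∂μ = 1) (hm : m = ∫ x, φ x * r x ^ 2 ∂μ)
    (hf : ∀ x, f x = φ x - m) :
    ∫ x, f x * r x * (ρ x - c * r x) ∂μ = ∫ x, f x * r x * ρ x ∂μ := by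
  have hfrr : Integrable (fun x => f x * r x * r x) μ := hfr.integrable_mul hr
  have hfrρ : Integrable (fun x => f x * r x * ρ x) μ := hfr.integrable_mul hρ
  have hrr : Integrable (fun x => r x ^ 2) μ := hr.integrable_sq
  have hφ : Integrable (fun x => φ x * r x ^ 2) μ := by
    refine (hfrr.add (hrr.const_mul m)).congr (.of_forall fun x => ?_)
    simp only [Pi.add_apply, hf]; ring
  have hfrr₀ : ∫ x, f x * r x * r x ∂μ = 0 := by
    calc ∫ x, f x * r x * r x ∂μ = ∫ x, φ x * r x ^ 2 - m * r x ^ 2 ∂μ := by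
          congr 1; ext x; rw [hf]; ring
      _ = 0 := by rw [integral_sub hφ (by fun_prop), integral_const_mul, hr₁, ← hm]; ring
  calc ∫ x, f x * r x * (ρ x - c * r x) ∂μ
      = ∫ x, f x * r x * ρ x - c * (f x * r x * r x) ∂μ := by congr 1; ext x; ring
    _ = ∫ x, f x * r x * ρ x ∂μ := by
      rw [integral_sub hfrρ (by fun_prop), integral_const_mul, hfrr₀]; ring

theorem integral_transport_identity {c' L L' : ℝ}
    (hρ₁ : ∫ x, ρ x ^ 2 ∂μ = 1) (hr_pos : ∀ x, 0 < r x) (hr₁ : ∫ x, r x ^ 2 ∂μ = 1)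
    (hm : m = ∫ x, φ x * r x ^ 2 ∂μ) (hf : ∀ x, f x = φ x - m)
    (hc : c = ∫ x, r x * ρ x ∂μ) (hc' : c' = ∫ x, 1 / 2 * f x * r x * ρ x ∂μ)
    (hfr : MemLp (fun x => f x * r x) 2 μ) (hu : MemLp (fun x => (ρ x / r x - c) * r x) 2 μ)
    (hL' : (1 - c ^ 2) * L' = c * L - 2)
    (hint : Integrable (fun x => (L * (ρ x / r x - c)) ^ 2 * f x * r x ^ 2) μ) :
    ∫ x, (L' * c' * (ρ x / r x - c) + L * (-(1 / 2) * f x * (ρ x / r x) - c'))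
        * (L * (ρ x / r x - c)) * r x ^ 2 ∂μ
      = -∫ x, L * (ρ x / r x - c) * φ x * r x ^ 2 ∂μ
        - 1 / 2 * ∫ x, (L * (ρ x / r x - c)) ^ 2 * f x * r x ^ 2 ∂μ := by
  have hr₀ : ∀ x, r x ≠ 0 := fun x => (hr_pos x).ne'
  have hr : MemLp r 2 μ :=
    memLp_two_of_nonneg_of_integral_sq_ne_zero_s3 (fun x => (hr_pos x).le) (by simp [hr₁])
  have hu_eq : ∀ x, (ρ x / r x - c) * r x = ρ x - c * r x := fun x => by field_simp [hr₀ x]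
  simp only [hu_eq] at hu
  have hρ : MemLp ρ 2 μ := by
    have : ρ = fun x => (ρ x - c * r x) + c * r x := by ext x; ring
    rw [this]
    exact hu.add (hr.const_mul c)
  have huu : Integrable (fun x => (ρ x - c * r x) ^ 2) μ := hu.integrable_sq
  have hur : Integrable (fun x => (ρ x - c * r x) * r x) μ := hu.integrable_mul hr
  have hfru : Integrable (fun x => f x * r x * (ρ x - c * r x)) μ := hfr.integrable_mul hu
  have hfru_eq : ∫ x, f x * r x * (ρ x - c * r x) ∂μ = 2 * c' := by
    rw [integral_mul_sub_mul hfr hr hρ hr₁ hm hf, hc', ← integral_const_mul]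
    congr 1; ext x; ring
  have hlhs : ∫ x, (L' * c' * (ρ x / r x - c) + L * (-(1 / 2) * f x * (ρ x / r x) - c'))
        * (L * (ρ x / r x - c)) * r x ^ 2 ∂μ
      = L * L' * c' * (1 - c ^ 2) - c * L ^ 2 * c'
        - 1 / 2 * ∫ x, (L * (ρ x / r x - c)) ^ 2 * f x * r x ^ 2 ∂μ := by
    calc _ = ∫ x, L * L' * c' * (ρ x - c * r x) ^ 2
            - 1 / 2 * c * L ^ 2 * (f x * r x * (ρ x - c * r x))
            - c' * L ^ 2 * ((ρ x - c * r x) * r x)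
            - 1 / 2 * ((L * (ρ x / r x - c)) ^ 2 * f x * r x ^ 2) ∂μ := by
          congr 1; ext x; field_simp [hr₀ x]; ring
      _ = _ := by
          rw [integral_sub (by fun_prop) (by fun_prop), integral_sub (by fun_prop) (by fun_prop),
            integral_sub (by fun_prop) (by fun_prop), integral_const_mul, integral_const_mul,
            integral_const_mul, integral_const_mul, integral_sub_mul_sq_s3 hr hρ hρ₁ hr₁ hc,
            integral_sub_mul_mul_eq_zero hr hρ hr₁ hc, hfru_eq]
          ring
  have hrhs : ∫ x, L * (ρ x / r x - c) * φ x * r x ^ 2 ∂μ = 2 * L * c' := by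
    calc _ = ∫ x, L * (f x * r x * (ρ x - c * r x)) + L * m * ((ρ x - c * r x) * r x) ∂μ := by
          congr 1; ext x; rw [hf]; field_simp [hr₀ x]; ring
      _ = _ := by
          rw [integral_add (by fun_prop) (by fun_prop), integral_const_mul, integral_const_mul,
            integral_sub_mul_mul_eq_zero hr hρ hr₁ hc, hfru_eq]
          ring
  rw [hlhs, hrhs]
  linear_combination L * c' * hL'

end FixedTime

theorem fisher_rao_transport_derivative_identity_general
    {Ω : Type*} [MeasurableSpace Ω] (μ : Measure Ω)
    (R Φ : ℝ → Ω → ℝ) (Rstar : Ω → ℝ)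
    (c m H : ℝ → ℝ) (F T : ℝ → Ω → ℝ)
    (hRstarnorm : ∫ x, (Rstar x)^2 ∂μ = 1)
    (hRpos : ∀ t x, 0 < R t x)
    (hRnorm : ∀ t, ∫ x, (R t x)^2 ∂μ = 1)
    (hm : ∀ t, m t = ∫ x, Φ t x * (R t x)^2 ∂μ)
    (hF : ∀ t x, F t x = Φ t x - m t)
    (hflowR : ∀ t x, HasDerivAt (fun s => R s x) ((1/2) * F t x * R t x) t)
    (hc : ∀ t, c t = ∫ x, R t x * Rstar x ∂μ)
    (hcIoo : ∀ t, c t ∈ Set.Ioo (0:ℝ) 1)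
    (hH : ∀ t, H t = Real.arccos (c t))
    (hT : ∀ t x, T t x = (2 * H t / Real.sin (H t)) * (Rstar x - R t x * c t) / R t x)
    (hc' : ∀ t, HasDerivAt c (∫ x, ((1/2) * F t x * R t x) * Rstar x ∂μ) t)
    (hL2F : ∀ t, MemLp (fun x => F t x * R t x) 2 μ)
    (hL2T : ∀ t, MemLp (fun x => (Rstar x / R t x - c t) * R t x) 2 μ)
    (hint3 : ∀ t, Integrable (fun x => (T t x)^2 * F t x * (R t x)^2) μ) :
    ∀ t : ℝ,
      (∫ x, deriv (fun s => T s x) t * T t x * (R t x)^2 ∂μ)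
        = - (∫ x, T t x * Φ t x * (R t x)^2 ∂μ)
          - (1/2) * ∫ x, (T t x)^2 * F t x * (R t x)^2 ∂μ := by
  intro t
  obtain ⟨hc₀, hc₁⟩ := hcIoo t
  set c' := ∫ x, 1 / 2 * F t x * R t x * Rstar x ∂μ
  set L := sphereLogCoeff (c t)
  have hT_eq : ∀ s x, T s x = sphereLogCoeff (c s) * (Rstar x / R s x - c s) := fun s x => by
    rw [hT, hH, sphereLogCoeff]
    field_simp [(hRpos s x).ne']
  have hT_deriv : ∀ x, deriv (fun s => T s x) t
      = (c t * L - 2) / (1 - c t ^ 2) * c' * (Rstar x / R t x - c t)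
        + L * (-(1 / 2) * F t x * (Rstar x / R t x) - c') := fun x => by
    simp_rw [hT_eq]
    exact (hasDerivAt_sphereLogCoeff_mul_div_sub (hflowR t x) (hRpos t x).ne' (hc' t)
      (by linarith) hc₁).deriv
  have hL' : (1 - c t ^ 2) * ((c t * L - 2) / (1 - c t ^ 2)) = c t * L - 2 :=
    mul_div_cancel₀ _ (by nlinarith)
  simp_rw [hT_deriv, hT_eq t]
  exact integral_transport_identity hRstarnorm (hRpos t) (hRnorm t) (hm t) (hF t) (hc t) rfl
    (hL2F t) (hL2T t) hL' (by simpa only [hT_eq] using hint3 t)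

/-- Key identity in the Fisher–Rao Lyapunov analysis:
`∫ ∂ₜT · T · R² dμ = −∫ T · Φ · R² dμ − ½ ∫ T² · F · R² dμ`. -/
theorem fisher_rao_transport_derivative_identity
    {Ω : Type*} [MeasurableSpace Ω] (μ : Measure Ω)
    (R Φ : ℝ → Ω → ℝ) (Rstar : Ω → ℝ)
    (c m H : ℝ → ℝ) (F T : ℝ → Ω → ℝ)
    (hRstarnorm : ∫ x, (Rstar x)^2 ∂μ = 1)
    (hRpos : ∀ t x, 0 < R t x)
    (hRnorm : ∀ t, ∫ x, (R t x)^2 ∂μ = 1)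
    (hΦdiff : ∀ t x, DifferentiableAt ℝ (fun s => Φ s x) t)
    (hm : ∀ t, m t = ∫ x, Φ t x * (R t x)^2 ∂μ)
    (hF : ∀ t x, F t x = Φ t x - m t)
    (hflowR : ∀ t x, HasDerivAt (fun s => R s x) ((1/2) * F t x * R t x) t)
    (hc : ∀ t, c t = ∫ x, R t x * Rstar x ∂μ)
    (hcIoo : ∀ t, c t ∈ Set.Ioo (0:ℝ) 1)
    (hH : ∀ t, H t = Real.arccos (c t))
    (hT : ∀ t x, T t x = (2 * H t / Real.sin (H t)) * (Rstar x - R t x * c t) / R t x)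
    (hc' : ∀ t, HasDerivAt c (∫ x, ((1/2) * F t x * R t x) * Rstar x ∂μ) t)
    (hL2F : ∀ t, MemLp (fun x => F t x * R t x) 2 μ)
    (hL2T : ∀ t, MemLp (fun x => (Rstar x / R t x - c t) * R t x) 2 μ)
    (hint1 : ∀ t, Integrable (fun x => deriv (fun s => T s x) t * T t x * (R t x)^2) μ)
    (hint2 : ∀ t, Integrable (fun x => T t x * Φ t x * (R t x)^2) μ)
    (hint3 : ∀ t, Integrable (fun x => (T t x)^2 * F t x * (R t x)^2) μ) :
    ∀ t : ℝ,
      (∫ x, deriv (fun s => T s x) t * T t x * (R t x)^2 ∂μ)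
        = - (∫ x, T t x * Φ t x * (R t x)^2 ∂μ)
          - (1/2) * ∫ x, (T t x)^2 * F t x * (R t x)^2 ∂μ :=
  fisher_rao_transport_derivative_identity_general μ R Φ Rstar c m H F T hRstarnorm hRpos hRnorm hm
    hF hflowR hc hcIoo hH hT hc' hL2F hL2T hint3
end

section
/- Suppose R, Φ solve the Fisher–Rao geodesic equations in square-root coordinates. Then for every x, the map t ↦ R(t,x) is twice differentiable, and ∂_tt R(t,x) = ¼ (m(t)² − q(t)) R(t,x) for all t and x; i.e., R satisfies the wave equation ∂_tt R = −H² R with constant H² = ¼(q − m²). -/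
open MeasureTheory

/-!
Along the flow, `∂ₜ(Φ R²) = (-½Φ² + mΦ) R² + Φ (Φ - m) R² = ½ Φ² R²`, so differentiating under the
integral gives `m' = ½ q`. Differentiating `∂ₜR = ½ (Φ - m) R` once more, the terms in `Φ` cancel
and leave `∂ₜₜR = ¼ (m² - q) R`.
-/

section Pointwise

variable {r φ c : ℝ → ℝ} {t : ℝ}

theorem hasDerivAt_mul_sq_of_flow {a : ℝ}
    (hr : HasDerivAt r ((1/2) * (φ t - a) * r t) t)
    (hφ : HasDerivAt φ (-(1/2) * (φ t)^2 + a * φ t) t) :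
    HasDerivAt (fun s => φ s * (r s)^2) ((1/2) * ((φ t)^2 * (r t)^2)) t :=
  (hφ.fun_mul (hr.fun_pow 2)).congr_deriv (by ring)

theorem hasDerivAt_deriv_of_flow {Q : ℝ}
    (hr : ∀ s, HasDerivAt r ((1/2) * (φ s - c s) * r s) s)
    (hφ : HasDerivAt φ (-(1/2) * (φ t)^2 + c t * φ t) t)
    (hc : HasDerivAt c ((1/2) * Q) t) :
    HasDerivAt (deriv r) ((1/4) * ((c t)^2 - Q) * r t) t := by
  have hderiv : deriv r = fun s => (1/2) * (φ s - c s) * r s := funext fun s => (hr s).deriv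
  rw [hderiv]
  exact (((hφ.fun_sub hc).const_mul (1/2 : ℝ)).fun_mul (hr t)).congr_deriv (by ring)

end Pointwise

theorem hasDerivAt_mean_of_flow {Ω : Type*} [MeasurableSpace Ω] {μ : Measure Ω}
    {R Φ : ℝ → Ω → ℝ} {m q : ℝ → ℝ} {t : ℝ}
    (hq : q t = ∫ x, (Φ t x)^2 * (R t x)^2 ∂μ)
    (hflowR : ∀ x, HasDerivAt (fun s => R s x) ((1/2) * (Φ t x - m t) * R t x) t)
    (hflowΦ : ∀ x, HasDerivAt (fun s => Φ s x) (-(1/2) * (Φ t x)^2 + m t * Φ t x) t)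
    (hm' : HasDerivAt m (∫ x, deriv (fun s => Φ s x * (R s x)^2) t ∂μ) t) :
    HasDerivAt m ((1/2) * q t) t := by
  have hintegrand : ∀ x, deriv (fun s => Φ s x * (R s x)^2) t = (1/2) * ((Φ t x)^2 * (R t x)^2) :=
    fun x => (hasDerivAt_mul_sq_of_flow (hflowR x) (hflowΦ x)).deriv
  simpa only [hintegrand, integral_const_mul, ← hq] using hm'

theorem fisher_rao_geodesic_wave_equation_general
    {Ω : Type*} [MeasurableSpace Ω] (μ : Measure Ω)
    (R Φ : ℝ → Ω → ℝ) (m q : ℝ → ℝ)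
    (hq : ∀ t, q t = ∫ x, (Φ t x)^2 * (R t x)^2 ∂μ)
    (hflowR : ∀ t x, HasDerivAt (fun s => R s x) ((1/2) * (Φ t x - m t) * R t x) t)
    (hflowΦ : ∀ t x, HasDerivAt (fun s => Φ s x) (-(1/2) * (Φ t x)^2 + m t * Φ t x) t)
    (hm' : ∀ t, HasDerivAt m (∫ x, deriv (fun s => Φ s x * (R s x)^2) t ∂μ) t) :
    ∀ t x, HasDerivAt (fun s => deriv (fun r => R r x) s)
      ((1/4) * ((m t)^2 - q t) * R t x) t := fun t x =>
  hasDerivAt_deriv_of_flow (fun s => hflowR s x) (hflowΦ t x)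
    (hasDerivAt_mean_of_flow (hq t) (hflowR t) (hflowΦ t) (hm' t))

/-- Along the Fisher–Rao geodesic equations in square-root coordinates,
`R` is twice differentiable in time and satisfies the wave equation
`∂ₜₜR(t,x) = ¼ (m(t)² − q(t)) R(t,x)`, i.e. `∂ₜₜR = −H²R` with `H² = ¼(q − m²)`. -/
theorem fisher_rao_geodesic_wave_equation
    {Ω : Type*} [MeasurableSpace Ω] (μ : Measure Ω)
    (R Φ : ℝ → Ω → ℝ) (m q : ℝ → ℝ)
    (hm : ∀ t, m t = ∫ x, Φ t x * (R t x)^2 ∂μ)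
    (hq : ∀ t, q t = ∫ x, (Φ t x)^2 * (R t x)^2 ∂μ)
    (hRnorm : ∀ t, ∫ x, (R t x)^2 ∂μ = 1)
    (hflowR : ∀ t x, HasDerivAt (fun s => R s x) ((1/2) * (Φ t x - m t) * R t x) t)
    (hflowΦ : ∀ t x, HasDerivAt (fun s => Φ s x) (-(1/2) * (Φ t x)^2 + m t * Φ t x) t)
    (hL2ΦR : ∀ t, MemLp (fun x => Φ t x * R t x) 2 μ)
    (hL2R : ∀ t, MemLp (fun x => R t x) 2 μ)
    (hm' : ∀ t, HasDerivAt m (∫ x, deriv (fun s => Φ s x * (R s x)^2) t ∂μ) t)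
    (hq' : ∀ t, HasDerivAt q (∫ x, deriv (fun s => (Φ s x)^2 * (R s x)^2) t ∂μ) t) :
    ∀ t x, HasDerivAt (fun s => deriv (fun r => R r x) s)
      ((1/4) * ((m t)^2 - q t) * R t x) t :=
  fisher_rao_geodesic_wave_equation_general μ R Φ m q hq hflowR hflowΦ hm'
end

section
/- Suppose R, Φ solve the Fisher–Rao geodesic equations in square-root coordinates. Then the Fisher–Rao kinetic energy t ↦ q(t) − m(t)² = ∫ Φ(t,·)² R(t,·)² dμ − (∫ Φ(t,·) R(t,·)² dμ)² is constant in t; i.e., the Hamiltonian is invariant along the Fisher–Rao geodesic flow. -/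
open MeasureTheory

/-! Along the flow, the integrands of `m` and `q` satisfy
`∂ₜ(Φ R²) = ½ Φ² R²` and `∂ₜ(Φ² R²) = m Φ² R²` pointwise, so `m' = q / 2` and `q' = m q`.
Hence `(q - m²)' = m q - 2 m (q / 2) = 0`. -/

section GeodesicIntegrands

variable {r φ : ℝ → ℝ} {c t : ℝ}

theorem HasDerivAt.geodesic_mul_sq (hr : HasDerivAt r (1 / 2 * (φ t - c) * r t) t)
    (hφ : HasDerivAt φ (-(1 / 2) * φ t ^ 2 + c * φ t) t) :
    HasDerivAt (fun s => φ s * r s ^ 2) (1 / 2 * (φ t ^ 2 * r t ^ 2)) t :=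
  (hφ.fun_mul (hr.fun_pow 2)).congr_deriv (by push_cast; ring)

theorem HasDerivAt.geodesic_sq_mul_sq (hr : HasDerivAt r (1 / 2 * (φ t - c) * r t) t)
    (hφ : HasDerivAt φ (-(1 / 2) * φ t ^ 2 + c * φ t) t) :
    HasDerivAt (fun s => φ s ^ 2 * r s ^ 2) (c * (φ t ^ 2 * r t ^ 2)) t :=
  ((hφ.fun_pow 2).fun_mul (hr.fun_pow 2)).congr_deriv (by push_cast; ring)

end GeodesicIntegrands

theorem hasDerivAt_sub_sq_eq_zero {m q : ℝ → ℝ} {t : ℝ} (hm : HasDerivAt m (1 / 2 * q t) t)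
    (hq : HasDerivAt q (m t * q t) t) : HasDerivAt (fun s => q s - m s ^ 2) 0 t :=
  (hq.fun_sub (hm.fun_pow 2)).congr_deriv (by push_cast; ring)

theorem fisher_rao_geodesic_hamiltonian_invariant_general
    {Ω : Type*} [MeasurableSpace Ω] (μ : Measure Ω)
    (R Φ : ℝ → Ω → ℝ) (m q : ℝ → ℝ)
    (hq : ∀ t, q t = ∫ x, (Φ t x)^2 * (R t x)^2 ∂μ)
    (hflowR : ∀ t x, HasDerivAt (fun s => R s x) ((1/2) * (Φ t x - m t) * R t x) t)
    (hflowΦ : ∀ t x, HasDerivAt (fun s => Φ s x) (-(1/2) * (Φ t x)^2 + m t * Φ t x) t)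
    (hm' : ∀ t, HasDerivAt m (∫ x, deriv (fun s => Φ s x * (R s x)^2) t ∂μ) t)
    (hq' : ∀ t, HasDerivAt q (∫ x, deriv (fun s => (Φ s x)^2 * (R s x)^2) t ∂μ) t) :
    ∀ t₁ t₂ : ℝ, q t₁ - (m t₁)^2 = q t₂ - (m t₂)^2 := by
  have hEnergy : ∀ t, HasDerivAt (fun s => q s - m s ^ 2) 0 t := by
    intro t
    have hm_ode : HasDerivAt m (1 / 2 * q t) t := by
      simpa only [fun x => ((hflowR t x).geodesic_mul_sq (hflowΦ t x)).deriv,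
        integral_const_mul, ← hq t] using hm' t
    have hq_ode : HasDerivAt q (m t * q t) t := by
      simpa only [fun x => ((hflowR t x).geodesic_sq_mul_sq (hflowΦ t x)).deriv,
        integral_const_mul, ← hq t] using hq' t
    exact hasDerivAt_sub_sq_eq_zero hm_ode hq_ode
  exact is_const_of_deriv_eq_zero (fun t => (hEnergy t).differentiableAt)
    (fun t => (hEnergy t).deriv)

/-- The Fisher–Rao kinetic energy (Hamiltonian) `q(t) − m(t)²` is invariant along the
Fisher–Rao geodesic flow in square-root coordinates. -/
theorem fisher_rao_geodesic_hamiltonian_invariant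
    {Ω : Type*} [MeasurableSpace Ω] (μ : Measure Ω)
    (R Φ : ℝ → Ω → ℝ) (m q : ℝ → ℝ)
    (hm : ∀ t, m t = ∫ x, Φ t x * (R t x)^2 ∂μ)
    (hq : ∀ t, q t = ∫ x, (Φ t x)^2 * (R t x)^2 ∂μ)
    (hRnorm : ∀ t, ∫ x, (R t x)^2 ∂μ = 1)
    (hflowR : ∀ t x, HasDerivAt (fun s => R s x) ((1/2) * (Φ t x - m t) * R t x) t)
    (hflowΦ : ∀ t x, HasDerivAt (fun s => Φ s x) (-(1/2) * (Φ t x)^2 + m t * Φ t x) t)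
    (hL2ΦR : ∀ t, MemLp (fun x => Φ t x * R t x) 2 μ)
    (hL2R : ∀ t, MemLp (fun x => R t x) 2 μ)
    (hm' : ∀ t, HasDerivAt m (∫ x, deriv (fun s => Φ s x * (R s x)^2) t ∂μ) t)
    (hq' : ∀ t, HasDerivAt q (∫ x, deriv (fun s => (Φ s x)^2 * (R s x)^2) t ∂μ) t) :
    ∀ t₁ t₂ : ℝ, q t₁ - (m t₁)^2 = q t₂ - (m t₂)^2 :=
  fisher_rao_geodesic_hamiltonian_invariant_general μ R Φ m q hq hflowR hflowΦ hm' hq'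
end

section
/- With A := (1/(2H)) (Φ₀ − m₀) R₀, the following hold: ∫ A² dμ = 1, ∫ A R₀ dμ = 0, and for every t ∈ ℝ, ∫ (A·sin(Ht) + R₀·cos(Ht))² dμ = 1. In particular, the explicit Fisher–Rao geodesic R(t) = A sin(Ht) + R₀ cos(Ht) in square-root coordinates stays on the unit sphere of L²(μ) for all t, with R(0) = R₀ and ∂_tR(0) = ½(Φ₀ − m₀)R₀. -/
open MeasureTheory

/-! With `c = 1/(2H)` the direction `A = c·Φ₀R₀ − c·m₀·R₀` is a combination of two `L²` functions,
so every integral in question expands bilinearly into `∫ R₀² = 1`, `∫ Φ₀R₀·R₀ = m₀` and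
`∫ (Φ₀R₀)² = q₀`. This gives `∫ A R₀ = c(m₀ − m₀) = 0` and `∫ A² = c²(q₀ − m₀²) = c²·4H² = 1`;
then `A` and `R₀` are orthonormal, so `A sin + R₀ cos` has unit norm by `sin² + cos² = 1`. -/

section SquareIntegrable

variable {Ω : Type*} [MeasurableSpace Ω] {μ : Measure Ω} {f g : Ω → ℝ}

theorem integral_mul_add_mul_sq (hf : MemLp f 2 μ) (hg : MemLp g 2 μ) (a b : ℝ) :
    ∫ x, (f x * a + g x * b) ^ 2 ∂μ =
      a ^ 2 * ∫ x, f x ^ 2 ∂μ + 2 * a * b * ∫ x, f x * g x ∂μ + b ^ 2 * ∫ x, g x ^ 2 ∂μ := by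
  have hfg : Integrable (fun x => f x * g x) μ := hf.integrable_mul hg
  calc ∫ x, (f x * a + g x * b) ^ 2 ∂μ
      = ∫ x, (a ^ 2 * f x ^ 2 + 2 * a * b * (f x * g x)) + b ^ 2 * g x ^ 2 ∂μ := by
        congr 1; ext x; ring
    _ = _ := by
        have hsum : Integrable (fun x => a ^ 2 * f x ^ 2 + 2 * a * b * (f x * g x)) μ :=
          (hf.integrable_sq.const_mul _).add (hfg.const_mul _)
        rw [integral_add hsum (hg.integrable_sq.const_mul _),
          integral_add (hf.integrable_sq.const_mul _) (hfg.const_mul _),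
          integral_const_mul, integral_const_mul, integral_const_mul]

theorem integral_mul_add_mul_mul_right (hf : MemLp f 2 μ) (hg : MemLp g 2 μ) (a b : ℝ) :
    ∫ x, (f x * a + g x * b) * g x ∂μ = a * ∫ x, f x * g x ∂μ + b * ∫ x, g x ^ 2 ∂μ := by
  calc ∫ x, (f x * a + g x * b) * g x ∂μ
      = ∫ x, a * (f x * g x) + b * g x ^ 2 ∂μ := by
        congr 1; ext x; ring
    _ = _ := by
        have hfg : Integrable (fun x => f x * g x) μ := hf.integrable_mul hg
        rw [integral_add (hfg.const_mul _) (hg.integrable_sq.const_mul _),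
          integral_const_mul, integral_const_mul]

end SquareIntegrable

theorem hasDerivAt_mul_sin_add_mul_cos (a r H t : ℝ) :
    HasDerivAt (fun t => a * Real.sin (H * t) + r * Real.cos (H * t))
      (H * (a * Real.cos (H * t) - r * Real.sin (H * t))) t := by
  have hlin : HasDerivAt (fun t => H * t) H t := by
    simpa using (hasDerivAt_id t).const_mul H
  refine ((((Real.hasDerivAt_sin _).comp t hlin).const_mul a).add
    (((Real.hasDerivAt_cos _).comp t hlin).const_mul r)).congr_deriv ?_
  ring

theorem fisher_rao_explicit_geodesic_on_sphere_general
    {Ω : Type*} [MeasurableSpace Ω] (μ : Measure Ω)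
    (R₀ Φ₀ : Ω → ℝ)
    (hR₀L2 : MemLp R₀ 2 μ) (hΦR₀L2 : MemLp (fun x => Φ₀ x * R₀ x) 2 μ)
    (hnorm : ∫ x, (R₀ x)^2 ∂μ = 1)
    (m₀ q₀ H : ℝ)
    (hm₀ : m₀ = ∫ x, Φ₀ x * (R₀ x)^2 ∂μ)
    (hq₀ : q₀ = ∫ x, (Φ₀ x)^2 * (R₀ x)^2 ∂μ)
    (hH : H = (1/2) * Real.sqrt (q₀ - m₀^2)) (hHpos : 0 < H)
    (A : Ω → ℝ) (hA : ∀ x, A x = (1/(2*H)) * (Φ₀ x - m₀) * R₀ x) :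
    (∫ x, (A x)^2 ∂μ = 1) ∧
    (∫ x, A x * R₀ x ∂μ = 0) ∧
    (∀ t : ℝ, ∫ x, (A x * Real.sin (H*t) + R₀ x * Real.cos (H*t))^2 ∂μ = 1) ∧
    (∀ x, A x * Real.sin (H*0) + R₀ x * Real.cos (H*0) = R₀ x) ∧
    (∀ x, HasDerivAt (fun t => A x * Real.sin (H*t) + R₀ x * Real.cos (H*t))
      ((1/2) * (Φ₀ x - m₀) * R₀ x) 0) := by
  have h4H : 4 * H ^ 2 = q₀ - m₀ ^ 2 := by
    have hpos : 0 < q₀ - m₀ ^ 2 := Real.sqrt_pos.mp (by linarith)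
    rw [hH, mul_pow, Real.sq_sqrt hpos.le]
    ring
  have hAeq : A = fun x => Φ₀ x * R₀ x * (1 / (2 * H)) + R₀ x * (-(1 / (2 * H)) * m₀) := by
    ext x; rw [hA]; ring
  have hm₀' : ∫ x, Φ₀ x * R₀ x * R₀ x ∂μ = m₀ := by
    rw [hm₀]; congr 1; ext x; ring
  have hq₀' : ∫ x, (Φ₀ x * R₀ x) ^ 2 ∂μ = q₀ := by
    rw [hq₀]; congr 1; ext x; ring
  have hAL2 : MemLp A 2 μ := hAeq ▸ (hΦR₀L2.mul_const _).add (hR₀L2.mul_const _)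
  have hAR : ∫ x, A x * R₀ x ∂μ = 0 := by
    rw [hAeq, integral_mul_add_mul_mul_right hΦR₀L2 hR₀L2, hm₀', hnorm]
    ring
  have hAA : ∫ x, A x ^ 2 ∂μ = 1 := by
    rw [hAeq, integral_mul_add_mul_sq hΦR₀L2 hR₀L2, hq₀', hm₀', hnorm]
    field_simp
    linarith
  refine ⟨hAA, hAR, fun t => ?_, fun x => by simp, fun x => ?_⟩
  · rw [integral_mul_add_mul_sq hAL2 hR₀L2, hAA, hAR, hnorm]
    linear_combination Real.sin_sq_add_cos_sq (H * t)
  · convert hasDerivAt_mul_sin_add_mul_cos (A x) (R₀ x) H 0 using 1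
    simp only [mul_zero, Real.cos_zero, Real.sin_zero, hA]
    field_simp
    ring

/-- The explicit Fisher–Rao geodesic `R(t) = A sin(Ht) + R₀ cos(Ht)` in square-root
coordinates, with `A = (1/(2H))(Φ₀ − m₀)R₀`, stays on the unit sphere of `L²(μ)`:
`∫ A² = 1`, `∫ A R₀ = 0` and `∫ R(t)² = 1` for all `t`; moreover `R(0) = R₀` and
`∂ₜR(0) = ½(Φ₀ − m₀)R₀`. -/
theorem fisher_rao_explicit_geodesic_on_sphere
    {Ω : Type*} [MeasurableSpace Ω] (μ : Measure Ω)
    (R₀ Φ₀ : Ω → ℝ) (hR₀meas : Measurable R₀) (hΦ₀meas : Measurable Φ₀)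
    (hR₀L2 : MemLp R₀ 2 μ) (hΦR₀L2 : MemLp (fun x => Φ₀ x * R₀ x) 2 μ)
    (hnorm : ∫ x, (R₀ x)^2 ∂μ = 1)
    (m₀ q₀ H : ℝ)
    (hm₀ : m₀ = ∫ x, Φ₀ x * (R₀ x)^2 ∂μ)
    (hq₀ : q₀ = ∫ x, (Φ₀ x)^2 * (R₀ x)^2 ∂μ)
    (hH : H = (1/2) * Real.sqrt (q₀ - m₀^2)) (hHpos : 0 < H)
    (A : Ω → ℝ) (hA : ∀ x, A x = (1/(2*H)) * (Φ₀ x - m₀) * R₀ x) :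
    (∫ x, (A x)^2 ∂μ = 1) ∧
    (∫ x, A x * R₀ x ∂μ = 0) ∧
    (∀ t : ℝ, ∫ x, (A x * Real.sin (H*t) + R₀ x * Real.cos (H*t))^2 ∂μ = 1) ∧
    (∀ x, A x * Real.sin (H*0) + R₀ x * Real.cos (H*0) = R₀ x) ∧
    (∀ x, HasDerivAt (fun t => A x * Real.sin (H*t) + R₀ x * Real.cos (H*t))
      ((1/2) * (Φ₀ x - m₀) * R₀ x) 0) :=
  fisher_rao_explicit_geodesic_on_sphere_general μ R₀ Φ₀ hR₀L2 hΦR₀L2 hnorm m₀ q₀ H hm₀ hq₀ hH hHpos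
    A hA
end

section
/- Then 0 < c < 1, where c := ∫ R₀ R₁ dμ, so H := arccos c lies in (0, π/2). Moreover, for every t ∈ [0,1], the function R_t := (sin(tH)·R₁ + sin((1−t)H)·R₀)/sin(H) satisfies R_t > 0 μ-almost everywhere and ∫ R_t² dμ = 1, with R_0 = R₀ and R_1 = R₁. Consequently ρ_t := R_t² is a curve of probability densities connecting ρ₀ = R₀² and ρ₁ = R₁² (the Fisher–Rao geodesic between two positive densities exists and stays positive). -/
/-!
Positivity of `R₀ R₁` gives `c > 0`, and `∫ (R₀ - R₁)² = 2 - 2c > 0` gives `c < 1`. The curve is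
the spherical interpolation of the unit vectors `R₀, R₁` of `L²(μ)` at angle `H` with
`cos H = c`; it has unit norm by the identity
`sin²(tH) + 2 sin(tH) sin((1-t)H) cos H + sin²((1-t)H) = sin² H`, and for `t ∈ [0, 1]` it is
a combination of `R₀, R₁` with nonnegative coefficients that do not both vanish.
-/

open MeasureTheory Real

noncomputable def slerp (H t a b : ℝ) : ℝ :=
  (sin (t * H) * b + sin ((1 - t) * H) * a) / sin H

theorem slerp_zero {H : ℝ} (hH : sin H ≠ 0) (a b : ℝ) : slerp H 0 a b = a := by
  simp [slerp, hH]

theorem slerp_one {H : ℝ} (hH : sin H ≠ 0) (a b : ℝ) : slerp H 1 a b = b := by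
  simp [slerp, hH]

theorem slerp_pos {H t a b : ℝ} (hH₀ : 0 < H) (hHπ : H < π) (ht : t ∈ Set.Icc (0 : ℝ) 1)
    (ha : 0 < a) (hb : 0 < b) : 0 < slerp H t a b := by
  obtain ⟨ht₀, ht₁⟩ := ht
  have hsin_1t : 0 ≤ sin ((1 - t) * H) :=
    sin_nonneg_of_nonneg_of_le_pi (by nlinarith) (by nlinarith)
  refine div_pos ?_ (sin_pos_of_pos_of_lt_pi hH₀ hHπ)
  rcases ht₀.eq_or_lt with rfl | ht₀
  · simpa using mul_pos (sin_pos_of_pos_of_lt_pi hH₀ hHπ) ha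
  · have hsin_t : 0 < sin (t * H) := sin_pos_of_pos_of_lt_pi (by positivity) (by nlinarith)
    nlinarith [mul_pos hsin_t hb, mul_nonneg hsin_1t ha.le]

namespace Real

theorem sin_sq_add_mul_cos_add_sin_sq (t H : ℝ) :
    sin (t * H) ^ 2 + 2 * sin (t * H) * sin ((1 - t) * H) * cos H + sin ((1 - t) * H) ^ 2
      = sin H ^ 2 := by
  have : sin ((1 - t) * H) = sin H * cos (t * H) - cos H * sin (t * H) := by
    rw [← sin_sub]; ring_nf
  rw [this]
  nlinarith [sin_sq_add_cos_sq (t * H), sin_sq_add_cos_sq H]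

end Real

namespace MeasureTheory

variable {Ω : Type*} [MeasurableSpace Ω] {μ : Measure Ω}

theorem integral_pos_of_ae_pos (hμ : μ ≠ 0) {f : Ω → ℝ} (hfi : Integrable f μ)
    (hf : ∀ᵐ x ∂μ, 0 < f x) : 0 < ∫ x, f x ∂μ := by
  have hf₀ : 0 ≤ᵐ[μ] f := hf.mono fun _ hx => hx.le
  refine (integral_nonneg_of_ae hf₀).lt_of_ne fun h => hμ ?_
  rw [← ae_eq_bot, ← Filter.eventually_false_iff_eq_bot]
  filter_upwards [hf, (integral_eq_zero_iff_of_nonneg_ae hf₀ hfi).1 h.symm] with x hpos hx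
  simp [hx] at hpos

theorem integral_sq_pos_of_not_ae_eq_zero {f : Ω → ℝ} (hf : Integrable (fun x => f x ^ 2) μ)
    (h : ¬ f =ᵐ[μ] 0) : 0 < ∫ x, f x ^ 2 ∂μ := by
  refine (integral_nonneg fun x => sq_nonneg (f x)).lt_of_ne fun h₀ => h ?_
  filter_upwards [(integral_eq_zero_iff_of_nonneg (fun x => sq_nonneg (f x)) hf).1 h₀.symm]
    with x hx
  exact pow_eq_zero_iff two_ne_zero |>.1 hx

theorem integral_add_mul_sq {f g : Ω → ℝ} (hf : MemLp f 2 μ) (hg : MemLp g 2 μ) (a b : ℝ) :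
    ∫ x, (a * f x + b * g x) ^ 2 ∂μ
      = a ^ 2 * ∫ x, f x ^ 2 ∂μ + 2 * a * b * ∫ x, f x * g x ∂μ + b ^ 2 * ∫ x, g x ^ 2 ∂μ := by
  have hfg : Integrable (fun x => f x * g x) μ := hf.integrable_mul hg
  calc ∫ x, (a * f x + b * g x) ^ 2 ∂μ
      = ∫ x, a ^ 2 * f x ^ 2 + 2 * a * b * (f x * g x) + b ^ 2 * g x ^ 2 ∂μ := by
        congr with x; ring
    _ = _ := by
      have hf₂ := hf.integrable_sq
      have hg₂ := hg.integrable_sq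
      rw [integral_add (by fun_prop) (by fun_prop), integral_add (by fun_prop) (by fun_prop),
        integral_const_mul, integral_const_mul, integral_const_mul]

variable {f g : Ω → ℝ}

theorem integral_mul_pos_of_ae_pos (hμ : μ ≠ 0) (hf : MemLp f 2 μ) (hg : MemLp g 2 μ)
    (hf₀ : ∀ᵐ x ∂μ, 0 < f x) (hg₀ : ∀ᵐ x ∂μ, 0 < g x) : 0 < ∫ x, f x * g x ∂μ :=
  integral_pos_of_ae_pos hμ (hf.integrable_mul hg) <| by
    filter_upwards [hf₀, hg₀] with x hfx hgx using mul_pos hfx hgx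

theorem integral_mul_lt_one_of_not_ae_eq (hf : MemLp f 2 μ) (hg : MemLp g 2 μ)
    (hf₁ : ∫ x, f x ^ 2 ∂μ = 1) (hg₁ : ∫ x, g x ^ 2 ∂μ = 1) (hne : ¬ f =ᵐ[μ] g) :
    ∫ x, f x * g x ∂μ < 1 := by
  have hpos : 0 < ∫ x, (f x - g x) ^ 2 ∂μ :=
    integral_sq_pos_of_not_ae_eq_zero (hf.sub hg).integrable_sq fun h => hne <| by
      filter_upwards [h] with x hx using sub_eq_zero.1 hx
  have hexp := integral_add_mul_sq hf hg 1 (-1)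
  simp only [one_mul, neg_one_mul, ← sub_eq_add_neg, hf₁, hg₁] at hexp
  linarith

theorem integral_sq_slerp (hf : MemLp f 2 μ) (hg : MemLp g 2 μ)
    (hf₁ : ∫ x, f x ^ 2 ∂μ = 1) (hg₁ : ∫ x, g x ^ 2 ∂μ = 1) {H : ℝ} (hH : sin H ≠ 0)
    (hfg : ∫ x, f x * g x ∂μ = cos H) (t : ℝ) :
    ∫ x, slerp H t (f x) (g x) ^ 2 ∂μ = 1 := by
  have hgf : ∫ x, g x * f x ∂μ = cos H := by simpa only [mul_comm] using hfg
  simp only [slerp, div_pow, integral_div, integral_add_mul_sq hg hf, hf₁, hg₁, hgf, mul_one]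
  rw [sin_sq_add_mul_cos_add_sin_sq, div_self (pow_ne_zero 2 hH)]

end MeasureTheory

/-- Existence and positivity of the Fisher–Rao geodesic between two positive densities:
if `R₀, R₁ > 0` a.e. are unit vectors of `L²(μ)` that are not a.e. equal, then
`c = ∫ R₀R₁ ∈ (0,1)`, `H = arccos c ∈ (0, π/2)`, and for `t ∈ [0,1]` the curve
`R_t = (sin(tH)R₁ + sin((1−t)H)R₀)/sin H` is positive a.e. with `∫ R_t² = 1`,
connecting `R₀` to `R₁`. -/
theorem fisher_rao_geodesic_between_positive_densities
    {Ω : Type*} [MeasurableSpace Ω] (μ : Measure Ω) (hμ : μ ≠ 0)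
    (R₀ R₁ : Ω → ℝ)
    (hR₀L2 : MemLp R₀ 2 μ) (hR₁L2 : MemLp R₁ 2 μ)
    (hR₀pos : ∀ᵐ x ∂μ, 0 < R₀ x) (hR₁pos : ∀ᵐ x ∂μ, 0 < R₁ x)
    (hR₀norm : ∫ x, (R₀ x)^2 ∂μ = 1) (hR₁norm : ∫ x, (R₁ x)^2 ∂μ = 1)
    (hne : ¬ (R₀ =ᵐ[μ] R₁))
    (c : ℝ) (hc : c = ∫ x, R₀ x * R₁ x ∂μ)
    (H : ℝ) (hH : H = Real.arccos c)
    (Rt : ℝ → Ω → ℝ)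
    (hRt : ∀ t x, Rt t x
      = (Real.sin (t*H) * R₁ x + Real.sin ((1-t)*H) * R₀ x) / Real.sin H) :
    (0 < c ∧ c < 1) ∧
    H ∈ Set.Ioo 0 (Real.pi/2) ∧
    (∀ t ∈ Set.Icc (0:ℝ) 1,
      (∀ᵐ x ∂μ, 0 < Rt t x) ∧ ∫ x, (Rt t x)^2 ∂μ = 1) ∧
    (∀ x, Rt 0 x = R₀ x) ∧ (∀ x, Rt 1 x = R₁ x) := by
  obtain rfl : Rt = fun t x => slerp H t (R₀ x) (R₁ x) := funext₂ hRt
  have hc₀ : 0 < c := hc ▸ integral_mul_pos_of_ae_pos hμ hR₀L2 hR₁L2 hR₀pos hR₁pos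
  have hc₁ : c < 1 := hc ▸ integral_mul_lt_one_of_not_ae_eq hR₀L2 hR₁L2 hR₀norm hR₁norm hne
  have hH₀ : 0 < H := hH ▸ arccos_pos.2 hc₁
  have hHπ₂ : H < π / 2 := hH ▸ arccos_lt_pi_div_two.2 hc₀
  have hHπ : H < π := hHπ₂.trans (half_lt_self pi_pos)
  have hsinH : sin H ≠ 0 := (sin_pos_of_pos_of_lt_pi hH₀ hHπ).ne'
  have hcosH : cos H = c := hH ▸ cos_arccos (by linarith) hc₁.le
  refine ⟨⟨hc₀, hc₁⟩, ⟨hH₀, hHπ₂⟩, fun t ht => ⟨?_, ?_⟩, fun x => slerp_zero hsinH _ _,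
    fun x => slerp_one hsinH _ _⟩
  · filter_upwards [hR₀pos, hR₁pos] with x h₀ h₁ using slerp_pos hH₀ hHπ ht h₀ h₁
  · exact integral_sq_slerp hR₀L2 hR₁L2 hR₀norm hR₁norm hsinH (by rw [hcosH, hc]) t
end

section
/- Assume ∇Φ − u is weakly divergence-free with respect to μ, that there exists a differentiable g : ℝⁿ → ℝ with ∇g(x) = (∇²Ψ(x)) u(x) for all x, and that the functions x ↦ ⟨∇Φ(x) − u(x), (∇²Ψ(x))∇Φ(x)⟩, x ↦ ⟨∇Φ(x) − u(x), (∇²Ψ(x))u(x)⟩ and x ↦ ⟨∇Φ(x) − u(x), (∇²Ψ(x))(∇Φ(x) − u(x))⟩ are μ-integrable. Then ∫ ⟨∇Φ(x) − u(x), (∇²Ψ(x))∇Φ(x)⟩ dμ(x) ≥ 0. -/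
open MeasureTheory
open scoped RealInnerProductSpace

/-!
Write `∇Φ = (∇Φ − u) + u` in the second slot. The term `⟪∇Φ − u, ∇²Ψ (∇Φ − u)⟫` is
pointwise nonnegative because the Hessian of a convex function is positive semidefinite (the
derivative of `Ψ` along a line is monotone), and the integral of
`⟪∇Φ − u, ∇²Ψ u⟫ = ⟪∇g, ∇Φ − u⟫` vanishes by the weak divergence-free condition tested against `g`.
-/

theorem hasDerivAt_add_smul {E : Type*} [NormedAddCommGroup E] [NormedSpace ℝ E] (x v : E)
    (t : ℝ) : HasDerivAt (fun s : ℝ => x + s • v) v t := by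
  simpa using ((hasDerivAt_id t).smul_const v).const_add x

section Convex

variable {E : Type*} [NormedAddCommGroup E] [InnerProductSpace ℝ E] [CompleteSpace E]
  {Ψ : E → ℝ}

theorem ContDiff.differentiable_gradient (hΨ : ContDiff ℝ 2 Ψ) : Differentiable ℝ (gradient Ψ) :=
  (InnerProductSpace.toDual ℝ E).symm.differentiable.comp
    ((hΨ.fderiv_right le_rfl).differentiable one_ne_zero)

theorem hasDerivAt_comp_add_smul {f : E → ℝ} {x v : E} {t : ℝ}
    (hf : DifferentiableAt ℝ f (x + t • v)) :
    HasDerivAt (fun s : ℝ => f (x + s • v)) ⟪v, gradient f (x + t • v)⟫ t := by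
  have := hf.hasGradientAt.hasFDerivAt.comp_hasDerivAt t (hasDerivAt_add_smul x v t)
  rwa [InnerProductSpace.toDual_apply_apply, real_inner_comm] at this

theorem ConvexOn.monotone_inner_gradient_add_smul (hconv : ConvexOn ℝ Set.univ Ψ)
    (hdiff : Differentiable ℝ Ψ) (x v : E) :
    Monotone fun t : ℝ => ⟪v, gradient Ψ (x + t • v)⟫ := by
  have hderiv : ∀ t : ℝ, HasDerivAt (fun s : ℝ => Ψ (x + s • v)) ⟪v, gradient Ψ (x + t • v)⟫ t :=
    fun t => hasDerivAt_comp_add_smul (hdiff _)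
  have hline : ConvexOn ℝ Set.univ fun t : ℝ => Ψ (x + t • v) := by
    simpa [Function.comp_def, AffineMap.lineMap_apply, add_comm] using
      hconv.comp_affineMap (AffineMap.lineMap x (x + v))
  have hmono := hline.monotoneOn_deriv fun t _ => (hderiv t).differentiableAt
  rw [funext fun t => (hderiv t).deriv] at hmono
  exact monotoneOn_univ.mp hmono

theorem ConvexOn.inner_fderiv_gradient_nonneg (hconv : ConvexOn ℝ Set.univ Ψ)
    (hdiff : Differentiable ℝ Ψ) {x : E} (hx : DifferentiableAt ℝ (gradient Ψ) x) (v : E) :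
    0 ≤ ⟪v, fderiv ℝ (gradient Ψ) x v⟫ := by
  have hx' : HasFDerivAt (gradient Ψ) (fderiv ℝ (gradient Ψ) x) (x + (0 : ℝ) • v) := by
    simpa using hx.hasFDerivAt
  have hgrad := hx'.comp_hasDerivAt 0 (hasDerivAt_add_smul x v 0)
  exact ((innerSL ℝ v).hasFDerivAt.comp_hasDerivAt 0 hgrad).nonneg_of_monotone
    (hconv.monotone_inner_gradient_add_smul hdiff x v)

end Convex

theorem integral_inner_hessian_gradPhi_nonneg_general
    {n : ℕ} (μ : Measure (EuclideanSpace ℝ (Fin n)))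
    (Ψ Φ : EuclideanSpace ℝ (Fin n) → ℝ)
    (u : EuclideanSpace ℝ (Fin n) → EuclideanSpace ℝ (Fin n))
    (hΨ : ContDiff ℝ 2 Ψ)
    (hconv : ConvexOn ℝ Set.univ Ψ)
    (hdivfree : ∀ h : EuclideanSpace ℝ (Fin n) → ℝ, Differentiable ℝ h →
      Integrable (fun x => ⟪gradient h x, gradient Φ x - u x⟫) μ →
      ∫ x, ⟪gradient h x, gradient Φ x - u x⟫ ∂μ = 0)
    (g : EuclideanSpace ℝ (Fin n) → ℝ) (hg : Differentiable ℝ g)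
    (hgrad : ∀ x, gradient g x = fderiv ℝ (gradient Ψ) x (u x))
    (hint2 : Integrable
      (fun x => ⟪gradient Φ x - u x, fderiv ℝ (gradient Ψ) x (u x)⟫) μ)
    (hint3 : Integrable
      (fun x => ⟪gradient Φ x - u x, fderiv ℝ (gradient Ψ) x (gradient Φ x - u x)⟫) μ) :
    0 ≤ ∫ x, ⟪gradient Φ x - u x, fderiv ℝ (gradient Ψ) x (gradient Φ x)⟫ ∂μ := by
  have hcross : (fun x => ⟪gradient Φ x - u x, fderiv ℝ (gradient Ψ) x (u x)⟫) =
      fun x => ⟪gradient g x, gradient Φ x - u x⟫ :=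
    funext fun x => by rw [hgrad, real_inner_comm]
  have hcross_zero : ∫ x, ⟪gradient Φ x - u x, fderiv ℝ (gradient Ψ) x (u x)⟫ ∂μ = 0 := by
    rw [hcross] at hint2 ⊢
    exact hdivfree g hg hint2
  calc 0 ≤ ∫ x, ⟪gradient Φ x - u x, fderiv ℝ (gradient Ψ) x (gradient Φ x - u x)⟫ ∂μ :=
        integral_nonneg fun x => hconv.inner_fderiv_gradient_nonneg
          (hΨ.differentiable two_ne_zero) (hΨ.differentiable_gradient x) _
    _ = ∫ x, ⟪gradient Φ x - u x, fderiv ℝ (gradient Ψ) x (gradient Φ x - u x)⟫ ∂μ +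
          ∫ x, ⟪gradient Φ x - u x, fderiv ℝ (gradient Ψ) x (u x)⟫ ∂μ := by
        rw [hcross_zero, add_zero]
    _ = ∫ x, ⟪gradient Φ x - u x, fderiv ℝ (gradient Ψ) x (gradient Φ x)⟫ ∂μ := by
        rw [← integral_add hint3 hint2]
        simp only [← inner_add_right, ← map_add, sub_add_cancel]

/-- If `∇Φ − u` is weakly divergence-free w.r.t. `μ`, `Ψ` is `C²` and convex, and
`∇²Ψ · u` is a gradient field, then `∫ ⟨∇Φ − u, ∇²Ψ ∇Φ⟩ dμ ≥ 0`. -/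
theorem integral_inner_hessian_gradPhi_nonneg
    {n : ℕ} (μ : Measure (EuclideanSpace ℝ (Fin n)))
    (Ψ Φ : EuclideanSpace ℝ (Fin n) → ℝ)
    (u : EuclideanSpace ℝ (Fin n) → EuclideanSpace ℝ (Fin n))
    (hΨ : ContDiff ℝ 2 Ψ)
    (hconv : ConvexOn ℝ Set.univ Ψ)
    (hΦ : Differentiable ℝ Φ)
    (hdivfree : ∀ h : EuclideanSpace ℝ (Fin n) → ℝ, Differentiable ℝ h →
      Integrable (fun x => ⟪gradient h x, gradient Φ x - u x⟫) μ →
      ∫ x, ⟪gradient h x, gradient Φ x - u x⟫ ∂μ = 0)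
    (g : EuclideanSpace ℝ (Fin n) → ℝ) (hg : Differentiable ℝ g)
    (hgrad : ∀ x, gradient g x = fderiv ℝ (gradient Ψ) x (u x))
    (hint1 : Integrable
      (fun x => ⟪gradient Φ x - u x, fderiv ℝ (gradient Ψ) x (gradient Φ x)⟫) μ)
    (hint2 : Integrable
      (fun x => ⟪gradient Φ x - u x, fderiv ℝ (gradient Ψ) x (u x)⟫) μ)
    (hint3 : Integrable
      (fun x => ⟪gradient Φ x - u x, fderiv ℝ (gradient Ψ) x (gradient Φ x - u x)⟫) μ) :
    0 ≤ ∫ x, ⟪gradient Φ x - u x, fderiv ℝ (gradient Ψ) x (gradient Φ x)⟫ ∂μ :=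
  integral_inner_hessian_gradPhi_nonneg_general μ Ψ Φ u hΨ hconv hdivfree g hg hgrad hint2 hint3
end

section
/- Suppose Φ solves the W-AIG Hamilton–Jacobi equation and X : ℝ → ℝⁿ is differentiable with X'(t) = ∇_xΦ(t, X(t)). Then V(t) := ∇_xΦ(t, X(t)) is differentiable and V'(t) = −α(t) V(t) − ∇_xΨ(t, X(t)). That is, a particle following the flow of ∇_xΦ satisfies the Lagrangian system dX/dt = V, dV/dt = −α_t V − ∇(δE/δρ_t)(X). -/
/-!
Along the flow, the chain rule gives `V' = ∂ₜ∇ₓΦ + ∇ₓ²Φ · X' = ∂ₜ∇ₓΦ + ∇ₓ²Φ · V`. Differentiating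
the Hamilton–Jacobi equation in `x`, and using the symmetry of the second derivative of `Φ` on
`ℝ × ℝⁿ` to identify `∇ₓ(∂ₜΦ) = ∂ₜ∇ₓΦ` and `∇ₓ(½‖∇ₓΦ‖²) = ∇ₓ²Φ · ∇ₓΦ`, yields
`∇ₓΨ = -(∂ₜ∇ₓΦ + α ∇ₓΦ + ∇ₓ²Φ · ∇ₓΦ)`, that is `V' = -α V - ∇ₓΨ(X)`.
-/

open Function
open scoped RealInnerProductSpace

section Product

variable {F ι : Type*} [NormedAddCommGroup F] [NormedSpace ℝ F] [Fintype ι]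

noncomputable def gradientSnd : (F × EuclideanSpace ℝ ι →L[ℝ] ℝ) →L[ℝ] EuclideanSpace ℝ ι :=
  (InnerProductSpace.toDual ℝ _).symm.toContinuousLinearEquiv.toContinuousLinearMap ∘L
    (ContinuousLinearMap.compL ℝ _ _ ℝ).flip (ContinuousLinearMap.inr ℝ F _)

theorem inner_gradientSnd (L : F × EuclideanSpace ℝ ι →L[ℝ] ℝ) (w : EuclideanSpace ℝ ι) :
    ⟪gradientSnd L, w⟫ = L (0, w) := by
  simp [gradientSnd, InnerProductSpace.toDual_symm_apply]

theorem gradient_eq_gradientSnd {Φ : F → EuclideanSpace ℝ ι → ℝ} {t : F} {x : EuclideanSpace ℝ ι}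
    (h : DifferentiableAt ℝ (uncurry Φ) (t, x)) :
    gradient (Φ t) x = gradientSnd (fderiv ℝ (uncurry Φ) (t, x)) := by
  have hslice : HasFDerivAt (Φ t) (fderiv ℝ (uncurry Φ) (t, x) ∘L ContinuousLinearMap.inr ℝ F _) x :=
    h.hasFDerivAt.comp x (hasFDerivAt_prodMk_right t x)
  simp [gradient, hslice.fderiv, gradientSnd]

theorem hasFDerivAt_gradient_uncurry {Φ : F → EuclideanSpace ℝ ι → ℝ}
    (hΦ : ContDiff ℝ 2 (uncurry Φ)) (p : F × EuclideanSpace ℝ ι) :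
    HasFDerivAt (fun q : F × EuclideanSpace ℝ ι => gradient (Φ q.1) q.2)
      (gradientSnd ∘L fderiv ℝ (fderiv ℝ (uncurry Φ)) p) p := by
  have hD : Differentiable ℝ (fderiv ℝ (uncurry Φ)) :=
    (hΦ.fderiv_right le_rfl).differentiable one_ne_zero
  have hgrad : (fun q : F × EuclideanSpace ℝ ι => gradient (Φ q.1) q.2) =
      gradientSnd ∘ fderiv ℝ (uncurry Φ) :=
    funext fun q => gradient_eq_gradientSnd (hΦ.differentiable two_ne_zero q)
  rw [hgrad]
  exact gradientSnd.hasFDerivAt.comp p (hD p).hasFDerivAt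

end Product

section Time

variable {ι : Type*} [Fintype ι] {Φ : ℝ → EuclideanSpace ℝ ι → ℝ}

theorem hasDerivAt_gradient_comp (hΦ : ContDiff ℝ 2 (uncurry Φ)) {X : ℝ → EuclideanSpace ℝ ι}
    {v : EuclideanSpace ℝ ι} {t : ℝ} (hX : HasDerivAt X v t) :
    HasDerivAt (fun s => gradient (Φ s) (X s))
      (gradientSnd (fderiv ℝ (fderiv ℝ (uncurry Φ)) (t, X t) (1, v))) t :=
  (hasFDerivAt_gradient_uncurry hΦ (t, X t)).comp_hasDerivAt (f := fun s => (s, X s)) t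
    ((hasDerivAt_id t).prodMk hX)

theorem hasGradientAt_deriv_fst (hΦ : ContDiff ℝ 2 (uncurry Φ)) (t : ℝ) (x : EuclideanSpace ℝ ι) :
    HasGradientAt (fun y => deriv (fun s => Φ s y) t)
      (gradientSnd (fderiv ℝ (fderiv ℝ (uncurry Φ)) (t, x) (1, 0))) x := by
  have hderiv : (fun y => deriv (fun s => Φ s y) t) = fun y => fderiv ℝ (uncurry Φ) (t, y) (1, 0) :=
    funext fun y => ((hΦ.differentiable two_ne_zero (t, y)).hasFDerivAt.comp_hasDerivAt
      (f := fun s => (s, y)) t ((hasDerivAt_id t).prodMk (hasDerivAt_const t y))).deriv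
  have hD : HasFDerivAt (fun y => fderiv ℝ (uncurry Φ) (t, y))
      (fderiv ℝ (fderiv ℝ (uncurry Φ)) (t, x) ∘L ContinuousLinearMap.inr ℝ ℝ _) x :=
    ((hΦ.fderiv_right le_rfl).differentiable one_ne_zero (t, x)).hasFDerivAt.comp x
      (hasFDerivAt_prodMk_right t x)
  rw [hderiv, hasGradientAt_iff_hasFDerivAt]
  refine (hD.clm_apply (hasFDerivAt_const ((1 : ℝ), (0 : EuclideanSpace ℝ ι)) x)).congr_fderiv ?_
  ext w
  simp only [ContinuousLinearMap.comp_zero, zero_add, ContinuousLinearMap.flip_apply,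
    ContinuousLinearMap.comp_apply, ContinuousLinearMap.inr_apply,
    InnerProductSpace.toDual_apply_apply, inner_gradientSnd]
  exact hΦ.contDiffAt.isSymmSndFDerivAt (by simp) _ _

theorem hasGradientAt_half_norm_sq_gradient (hΦ : ContDiff ℝ 2 (uncurry Φ)) (t : ℝ)
    (x : EuclideanSpace ℝ ι) :
    HasGradientAt (fun y => 1 / 2 * ‖gradient (Φ t) y‖ ^ 2)
      (gradientSnd (fderiv ℝ (fderiv ℝ (uncurry Φ)) (t, x) (0, gradient (Φ t) x))) x := by
  have hgrad : HasFDerivAt (gradient (Φ t))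
      (gradientSnd ∘L fderiv ℝ (fderiv ℝ (uncurry Φ)) (t, x) ∘L ContinuousLinearMap.inr ℝ ℝ _) x :=
    (hasFDerivAt_gradient_uncurry hΦ (t, x)).comp x (hasFDerivAt_prodMk_right t x)
  rw [hasGradientAt_iff_hasFDerivAt]
  refine (hgrad.norm_sq.const_mul (1 / 2)).congr_fderiv ?_
  ext w
  simp only [InnerProductSpace.toDual_apply_apply, smul_apply, ContinuousLinearMap.comp_apply,
    innerSL_apply_apply, ContinuousLinearMap.inr_apply, smul_eq_mul, nsmul_eq_mul,
    inner_gradientSnd]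
  rw [real_inner_comm, inner_gradientSnd, hΦ.contDiffAt.isSymmSndFDerivAt (by simp)]
  ring

theorem hasGradientAt_of_hamiltonJacobi (hΦ : ContDiff ℝ 2 (uncurry Φ))
    {Ψ : EuclideanSpace ℝ ι → ℝ} {a t : ℝ}
    (hHJ : ∀ y, deriv (fun s => Φ s y) t + a * Φ t y + 1 / 2 * ‖gradient (Φ t) y‖ ^ 2 + Ψ y = 0)
    (x : EuclideanSpace ℝ ι) :
    HasGradientAt Ψ (-(gradientSnd (fderiv ℝ (fderiv ℝ (uncurry Φ)) (t, x) (1, gradient (Φ t) x))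
      + a • gradient (Φ t) x)) x := by
  have hΨ : Ψ = fun y =>
      -(deriv (fun s => Φ s y) t + a * Φ t y + 1 / 2 * ‖gradient (Φ t) y‖ ^ 2) :=
    funext fun y => by linarith [hHJ y]
  have hΦt : DifferentiableAt ℝ (Φ t) x :=
    (hΦ.differentiable two_ne_zero).comp ((differentiable_const t).prodMk differentiable_id) x
  have hsum := (((hasGradientAt_iff_hasFDerivAt.mp (hasGradientAt_deriv_fst hΦ t x)).add
    ((hasGradientAt_iff_hasFDerivAt.mp hΦt.hasGradientAt).const_mul a)).add
    (hasGradientAt_iff_hasFDerivAt.mp (hasGradientAt_half_norm_sq_gradient hΦ t x))).neg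
  rw [hΨ, hasGradientAt_iff_hasFDerivAt]
  refine hsum.congr_fderiv ?_
  rw [show ((1 : ℝ), gradient (Φ t) x) = (1, 0) + (0, gradient (Φ t) x) by simp]
  simp only [map_add, map_neg, map_smul]
  abel

end Time

theorem particle_W_AIG_flow_general
    {n : ℕ} (Φ Ψ : ℝ → EuclideanSpace ℝ (Fin n) → ℝ) (α : ℝ → ℝ)
    (hΦ : ContDiff ℝ 2 (fun p : ℝ × EuclideanSpace ℝ (Fin n) => Φ p.1 p.2))
    (hHJ : ∀ t x, deriv (fun s => Φ s x) t + α t * Φ t x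
      + (1/2) * ‖gradient (Φ t) x‖^2 + Ψ t x = 0)
    (X : ℝ → EuclideanSpace ℝ (Fin n))
    (hX : ∀ t, HasDerivAt X (gradient (Φ t) (X t)) t)
    (V : ℝ → EuclideanSpace ℝ (Fin n))
    (hV : ∀ t, V t = gradient (Φ t) (X t)) :
    ∀ t, HasDerivAt V (-(α t) • V t - gradient (Ψ t) (X t)) t := by
  intro t
  have hgradΨ := (hasGradientAt_of_hamiltonJacobi hΦ (hHJ t) (X t)).gradient
  rw [funext hV, hgradΨ]
  convert hasDerivAt_gradient_comp hΦ (hX t) using 1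
  module

/-- Particle formulation of the W-AIG flow: if `Φ` solves the Hamilton–Jacobi equation
`∂ₜΦ + αΦ + ½‖∇Φ‖² + Ψ = 0` and `X' = ∇ₓΦ(t, X)`, then `V := ∇ₓΦ(t, X)` satisfies
`V' = −αV − ∇ₓΨ(t, X)`. -/
theorem particle_W_AIG_flow
    {n : ℕ} (Φ Ψ : ℝ → EuclideanSpace ℝ (Fin n) → ℝ) (α : ℝ → ℝ)
    (hΦ : ContDiff ℝ 2 (fun p : ℝ × EuclideanSpace ℝ (Fin n) => Φ p.1 p.2))
    (hΨ : ∀ t, Differentiable ℝ (Ψ t))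
    (hHJ : ∀ t x, deriv (fun s => Φ s x) t + α t * Φ t x
      + (1/2) * ‖gradient (Φ t) x‖^2 + Ψ t x = 0)
    (X : ℝ → EuclideanSpace ℝ (Fin n))
    (hX : ∀ t, HasDerivAt X (gradient (Φ t) (X t)) t)
    (V : ℝ → EuclideanSpace ℝ (Fin n))
    (hV : ∀ t, V t = gradient (Φ t) (X t)) :
    ∀ t, HasDerivAt V (-(α t) • V t - gradient (Ψ t) (X t)) t :=
  particle_W_AIG_flow_general Φ Ψ α hΦ hHJ X hX V hV
end
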